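/- arXiv:2503.23815 — 9 statements merged into one kernel-verified Lean document; each statement's English description precedes it below -/
import Mathlib

section
/- Let ε > 0, A an m×d real matrix, b ∈ ℝ^m, c ∈ ℝ^d, and λ ∈ ℝ^m be fixed. The function x ↦ c·x + λ·(b − Ax) + ε·f(x), where f is the Boltzmann–Shannon entropy, attains a global minimum over {x ∈ ℝ^d : x ≥ 0} at the unique point x*(λ) with coordinates x*(λ)_i = exp((Aᵀλ − c)_i/ε − 1) > 0 for i = 1,…,d, and the minimum value equals b·λ − ε·Σ_{i=1}^d x*(λ)_i = b·λ − (ε/e)·Σ_{i=1}^d exp((Aᵀλ − c)_i/ε). -/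
open Matrix Real

lemma key_strict (ε a t : ℝ) (hε : 0 < ε) (ht : 0 ≤ t)
    (hne : t ≠ Real.exp (a / ε - 1)) :
    -ε * Real.exp (a / ε - 1) < ε * (t * Real.log t) - a * t := by
  set s := Real.exp (a / ε - 1) with hs
  have hs0 : 0 < s := Real.exp_pos _
  have hlogs : Real.log s = a / ε - 1 := by rw [hs, Real.log_exp]
  have ha : a = ε * (Real.log s + 1) := by
    have := hlogs; field_simp at this; linarith
  rcases eq_or_lt_of_le ht with h0 | h0
  · rw [← h0]; simp; nlinarith
  · have hne' : Real.log s - Real.log t ≠ 0 := by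
      intro h
      apply hne
      have := Real.log_injOn_pos (Set.mem_Ioi.mpr h0) (Set.mem_Ioi.mpr hs0)
      exact this (by linarith)
    have h1 := Real.add_one_lt_exp hne'
    rw [Real.exp_sub, Real.exp_log hs0, Real.exp_log h0] at h1
    have h2 : t * (Real.log s - Real.log t + 1) < s := by
      rw [lt_div_iff₀ h0] at h1; nlinarith
    nlinarith

lemma key_le (ε a t : ℝ) (hε : 0 < ε) (ht : 0 ≤ t) :
    -ε * Real.exp (a / ε - 1) ≤ ε * (t * Real.log t) - a * t := by
  rcases eq_or_ne t (Real.exp (a / ε - 1)) with h | h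
  · subst h
    refine le_of_eq ?_
    rw [Real.log_exp]
    have hε' : ε ≠ 0 := ne_of_gt hε
    field_simp
    ring
  · exact le_of_lt (key_strict ε a t hε ht h)

/-- For fixed `ε > 0`, `A`, `b`, `c`, `λ`, the Lagrangian
`x ↦ c·x + λ·(b − Ax) + ε·f(x)` (with `f` the Boltzmann–Shannon entropy
`f(x) = ∑ᵢ xᵢ ln xᵢ` on the nonnegative orthant, `0·ln 0 = 0`) attains its
global minimum over `{x : x ≥ 0}` at the unique point `x*(λ)` with
`x*(λ)ᵢ = exp((Aᵀλ − c)ᵢ/ε − 1) > 0`, and the minimum value equals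
`b·λ − ε·∑ᵢ x*(λ)ᵢ = b·λ − (ε/e)·∑ᵢ exp((Aᵀλ − c)ᵢ/ε)`. -/
theorem lagrangian_min_entropy_LP {m d : ℕ} (ε : ℝ) (hε : 0 < ε)
    (A : Matrix (Fin m) (Fin d) ℝ) (b : Fin m → ℝ) (c : Fin d → ℝ) (lam : Fin m → ℝ)
    (L : (Fin d → ℝ) → ℝ)
    (hL : ∀ x, L x = c ⬝ᵥ x + lam ⬝ᵥ (b - A.mulVec x) + ε * ∑ i, x i * Real.log (x i))
    (xstar : Fin d → ℝ)
    (hxstar : ∀ i, xstar i = Real.exp ((Aᵀ.mulVec lam - c) i / ε - 1)) :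
    (∀ i, 0 < xstar i) ∧
    (∀ x : Fin d → ℝ, (∀ i, 0 ≤ x i) → L xstar ≤ L x) ∧
    (∀ x : Fin d → ℝ, (∀ i, 0 ≤ x i) → L x = L xstar → x = xstar) ∧
    L xstar = b ⬝ᵥ lam - ε * ∑ i, xstar i ∧
    L xstar = b ⬝ᵥ lam - (ε / Real.exp 1) * ∑ i, Real.exp ((Aᵀ.mulVec lam - c) i / ε) := by
  set a : Fin d → ℝ := Aᵀ.mulVec lam - c with ha
  have hLrw : ∀ x, L x = b ⬝ᵥ lam + ∑ i, (ε * (x i * Real.log (x i)) - a i * x i) := by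
    intro x
    rw [hL]
    have key1 : lam ⬝ᵥ A.mulVec x = (Aᵀ.mulVec lam) ⬝ᵥ x := by
      rw [Matrix.dotProduct_mulVec, ← Matrix.mulVec_transpose]
    rw [dotProduct_sub, key1, dotProduct_comm lam b]
    simp only [dotProduct, ha, Pi.sub_apply, sub_mul, Finset.mul_sum,
      Finset.sum_sub_distrib]
    ring
  have hpos : ∀ i, 0 < xstar i := fun i => (hxstar i) ▸ Real.exp_pos _
  have hterm : ∀ i, ε * (xstar i * Real.log (xstar i)) - a i * xstar i = -ε * xstar i := by
    intro i
    have hlog : Real.log (xstar i) = a i / ε - 1 := by rw [hxstar i, Real.log_exp]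
    rw [hlog]
    have hε' : ε ≠ 0 := ne_of_gt hε
    field_simp
    ring
  have hge : ∀ (x : Fin d → ℝ), (∀ i, 0 ≤ x i) → ∀ j,
      ε * (xstar j * Real.log (xstar j)) - a j * xstar j
        ≤ ε * (x j * Real.log (x j)) - a j * x j := by
    intro x hx j
    calc ε * (xstar j * Real.log (xstar j)) - a j * xstar j
        = -ε * Real.exp (a j / ε - 1) := by rw [hterm j, hxstar j]
      _ ≤ ε * (x j * Real.log (x j)) - a j * x j := key_le ε (a j) (x j) hε (hx j)
  have hval : L xstar = b ⬝ᵥ lam - ε * ∑ i, xstar i := by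
    rw [hLrw, Finset.sum_congr rfl (fun i _ => hterm i), Finset.mul_sum]
    simp [neg_mul, sub_eq_add_neg]
  refine ⟨hpos, ?_, ?_, hval, ?_⟩
  · intro x hx
    rw [hLrw, hLrw]
    exact add_le_add_right (Finset.sum_le_sum fun i _ => hge x hx i) _
  · intro x hx hLx
    funext i
    by_contra hne
    have hne' : x i ≠ Real.exp (a i / ε - 1) := by rw [← hxstar i]; exact hne
    have hstrict := key_strict ε (a i) (x i) hε (hx i) hne'
    have hlt : L xstar < L x := by
      rw [hLrw, hLrw]
      have := Finset.sum_lt_sum (fun j _ => hge x hx j) ⟨i, Finset.mem_univ i, by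
        rw [hterm i, hxstar i]; exact hstrict⟩
      linarith
    rw [hLx] at hlt
    exact lt_irrefl _ hlt
  · rw [hval]
    congr 1
    rw [Finset.mul_sum, Finset.mul_sum]
    refine Finset.sum_congr rfl (fun i _ => ?_)
    rw [hxstar i, Real.exp_sub]
    field_simp
end

section
/- Let ε > 0, A an m×d real matrix, b ∈ ℝ^m, c ∈ ℝ^d. The dual function G_ε : ℝ^m → ℝ defined by G_ε(λ) = b·λ − (ε/e)·Σ_{i=1}^d exp((Aᵀλ − c)_i/ε) is differentiable on ℝ^m with gradient ∇G_ε(λ) = b − A·x*(λ), where x*(λ)_i = exp((Aᵀλ − c)_i/ε − 1); moreover, if A has full row rank then G_ε is strictly concave on ℝ^m. -/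
open Matrix Real

noncomputable def dotCLM {m : ℕ} (w : Fin m → ℝ) : (Fin m → ℝ) →L[ℝ] ℝ :=
  LinearMap.toContinuousLinearMap
    { toFun := fun v => w ⬝ᵥ v
      map_add' := by intros; simp [dotProduct_add]
      map_smul' := by intros; simp [dotProduct_smul] }

@[simp] lemma dotCLM_apply {m : ℕ} (w v : Fin m → ℝ) : dotCLM w v = w ⬝ᵥ v := rfl

lemma transpose_mulVec_injective {m d : ℕ} (A : Matrix (Fin m) (Fin d) ℝ)
    (hA : A.rank = m) : Function.Injective Aᵀ.mulVec := by
  have hr : Aᵀ.rank = m := by rw [Matrix.rank_transpose]; exact hA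
  have hker : LinearMap.ker Aᵀ.mulVecLin = ⊥ := by
    have hrn := LinearMap.finrank_range_add_finrank_ker Aᵀ.mulVecLin
    rw [Module.finrank_fintype_fun_eq_card, Fintype.card_fin] at hrn
    have : Module.finrank ℝ (LinearMap.ker Aᵀ.mulVecLin) = 0 := by
      have : Matrix.rank Aᵀ = Module.finrank ℝ (LinearMap.range Aᵀ.mulVecLin) := rfl
      omega
    exact Submodule.finrank_eq_zero.mp this
  intro x y hxy
  exact (LinearMap.ker_eq_bot.mp hker) hxy

/-- The dual function `G_ε(λ) = b·λ − (ε/e)·∑ᵢ exp((Aᵀλ − c)ᵢ/ε)` is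
differentiable on `ℝ^m` with gradient `∇G_ε(λ) = b − A·x*(λ)` where
`x*(λ)ᵢ = exp((Aᵀλ − c)ᵢ/ε − 1)`; moreover if `A` has full row rank then
`G_ε` is strictly concave on `ℝ^m`. -/
theorem dual_function_differentiable_strictConcave {m d : ℕ} (ε : ℝ) (hε : 0 < ε)
    (A : Matrix (Fin m) (Fin d) ℝ) (b : Fin m → ℝ) (c : Fin d → ℝ)
    (G : (Fin m → ℝ) → ℝ)
    (hG : ∀ lam, G lam =
      b ⬝ᵥ lam - (ε / Real.exp 1) * ∑ i, Real.exp ((Aᵀ.mulVec lam - c) i / ε))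
    (xstar : (Fin m → ℝ) → Fin d → ℝ)
    (hx : ∀ lam i, xstar lam i = Real.exp ((Aᵀ.mulVec lam - c) i / ε - 1)) :
    Differentiable ℝ G ∧
    (∀ lam v, fderiv ℝ G lam v = (b - A.mulVec (xstar lam)) ⬝ᵥ v) ∧
    (A.rank = m → StrictConcaveOn ℝ Set.univ G) := by
  have hεne : ε ≠ 0 := ne_of_gt hε
  -- the inner affine functions
  set g : Fin d → (Fin m → ℝ) → ℝ := fun i lam => ((Aᵀ.mulVec lam) i - c i) / ε with hg
  have hGe : ∀ lam, G lam = b ⬝ᵥ lam - (ε / Real.exp 1) * ∑ i, Real.exp (g i lam) := by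
    intro lam; rw [hG]; simp [hg, Pi.sub_apply]
  -- derivatives of the inner functions
  have hgder : ∀ (i : Fin d) (lam : Fin m → ℝ),
      HasFDerivAt (g i) ((1 / ε) • dotCLM (Aᵀ i)) lam := by
    intro i lam
    have h1 : (g i) = fun x => ((dotCLM (Aᵀ i)) x - c i) * (1 / ε) := by
      funext x
      simp only [hg, dotCLM_apply, Matrix.mulVec, div_eq_mul_inv, one_div, one_mul]
    rw [h1]
    have := (((dotCLM (Aᵀ i)).hasFDerivAt (x := lam)).sub_const (c i)).mul_const (1 / ε)
    convert this using 1
  set L : (Fin m → ℝ) → ((Fin m → ℝ) →L[ℝ] ℝ) := fun lam =>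
    dotCLM b - (ε / Real.exp 1) • ∑ i, Real.exp (g i lam) • ((1 / ε) • dotCLM (Aᵀ i)) with hL
  have hder : ∀ lam, HasFDerivAt G (L lam) lam := by
    intro lam
    have hsum : HasFDerivAt (fun x => ∑ i, Real.exp (g i x))
        (∑ i, Real.exp (g i lam) • ((1 / ε) • dotCLM (Aᵀ i))) lam :=
      HasFDerivAt.fun_sum fun i _ => (hgder i lam).exp
    have : HasFDerivAt (fun x => b ⬝ᵥ x - (ε / Real.exp 1) * ∑ i, Real.exp (g i x))
        (L lam) lam := by
      exact ((dotCLM b).hasFDerivAt).sub (hsum.const_mul (ε / Real.exp 1))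
    exact this.congr_of_eventuallyEq (by filter_upwards with x using (hGe x))
  have hLapp : ∀ lam v, L lam v = (b - A.mulVec (xstar lam)) ⬝ᵥ v := by
    intro lam v
    have hAx : (A.mulVec (xstar lam)) ⬝ᵥ v = ∑ i, xstar lam i * ((Aᵀ i) ⬝ᵥ v) := by
      rw [dotProduct_comm, Matrix.dotProduct_mulVec, dotProduct_comm]
      simp [dotProduct, Matrix.vecMul, dotProduct, Finset.mul_sum,
        mul_comm, transpose_apply]
    simp only [hL, ContinuousLinearMap.sub_apply, ContinuousLinearMap.smul_apply,
      ContinuousLinearMap.sum_apply, dotCLM_apply, sub_dotProduct, hAx]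
    rw [smul_eq_mul, Finset.mul_sum]
    congr 1
    apply Finset.sum_congr rfl
    intro i _
    have hxs : xstar lam i = Real.exp (g i lam) / Real.exp 1 := by
      rw [hx, ← Real.exp_sub]
      simp [hg, Pi.sub_apply]
    rw [hxs]
    field_simp
    simp only [smul_eq_mul]
    field_simp
  refine ⟨fun lam => (hder lam).differentiableAt, ?_, ?_⟩
  · intro lam v
    rw [(hder lam).fderiv]
    exact hLapp lam v
  · intro hA
    have hinj : Function.Injective Aᵀ.mulVec := transpose_mulVec_injective A hA
    constructor
    · exact convex_univ
    · intro x _ y _ hxy a t ha ht hat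
      rw [hGe, hGe, hGe]
      have hlin : b ⬝ᵥ (a • x + t • y) = a * (b ⬝ᵥ x) + t * (b ⬝ᵥ y) := by
        simp [dotProduct_add, dotProduct_smul, smul_eq_mul]
      have hgaff : ∀ i, g i (a • x + t • y) = a * g i x + t * g i y := by
        intro i
        simp only [hg, Matrix.mulVec_add, Matrix.mulVec_smul, Pi.add_apply,
          Pi.smul_apply, smul_eq_mul]
        field_simp
        linear_combination (c i) * hat
      have hsumlt : ∑ i, Real.exp (g i (a • x + t • y))
          < a * ∑ i, Real.exp (g i x) + t * ∑ i, Real.exp (g i y) := by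
        rw [Finset.mul_sum, Finset.mul_sum, ← Finset.sum_add_distrib]
        have hne : Aᵀ.mulVec x ≠ Aᵀ.mulVec y := fun h => hxy (hinj h)
        obtain ⟨i0, hi0⟩ := Function.ne_iff.mp hne
        have hgne : g i0 x ≠ g i0 y := by
          simp only [hg]
          intro h
          exact hi0 (by field_simp at h; linarith)
        apply Finset.sum_lt_sum
        · intro i _
          rw [hgaff i]
          have := convexOn_exp.2 (Set.mem_univ (g i x)) (Set.mem_univ (g i y))
            (le_of_lt ha) (le_of_lt ht) hat
          simpa [smul_eq_mul] using this
        · refine ⟨i0, Finset.mem_univ i0, ?_⟩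
          rw [hgaff i0]
          have := strictConvexOn_exp.2 (Set.mem_univ (g i0 x)) (Set.mem_univ (g i0 y))
            hgne ha ht hat
          simpa [smul_eq_mul] using this
      have hcoef : 0 < ε / Real.exp 1 := div_pos hε (Real.exp_pos 1)
      have := mul_lt_mul_of_pos_left hsumlt hcoef
      simp only [smul_eq_mul]
      nlinarith [this]
end

section
/- (Coercivity of the LP dual function.) Let ε > 0, let A be an m×d real matrix of full row rank, b ∈ ℝ^m, c ∈ ℝ^d, and suppose there exists x₀ ∈ ℝ^d with x₀ > 0 componentwise and A·x₀ = b. Then the function −G_ε is coercive, i.e., G_ε(λ) → −∞ as ‖λ‖ → +∞. -/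
open Matrix Real Filter

lemma key_ineq (a K ε c t : ℝ) (ha : 0 < a) (hK : 0 < K) (hε : 0 < ε) :
    a * t - K * Real.exp ((t - c) / ε) ≤ (2 * a * |c| + 4 * a ^ 2 * ε ^ 2 / K) - a * |t| := by
  have hD0 : 0 ≤ 4 * a ^ 2 * ε ^ 2 / K := by positivity
  have hD : 4 * a ^ 2 * ε ^ 2 / K * K = 4 * a ^ 2 * ε ^ 2 := by field_simp
  have hexp : 0 < Real.exp ((t - c) / ε) := Real.exp_pos _
  have hKe : 0 < K * Real.exp ((t - c) / ε) := mul_pos hK hexp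
  rcases le_or_gt t 0 with ht | ht
  · rw [abs_of_nonpos ht]
    nlinarith [abs_nonneg c, mul_nonneg (mul_nonneg (by norm_num : (0:ℝ) ≤ 2) ha.le) (abs_nonneg c)]
  · rw [abs_of_pos ht]
    rcases le_or_gt t c with htc | htc
    · have hc : |c| = c := abs_of_pos (lt_of_lt_of_le ht htc)
      nlinarith [mul_le_mul_of_nonneg_left htc ha.le]
    · set s := (t - c) / ε with hs
      have hs0 : 0 ≤ s := div_nonneg (by linarith) hε.le
      have h1 : s / 2 + 1 ≤ Real.exp (s / 2) := Real.add_one_le_exp _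
      have h2 : (s / 2 + 1) ^ 2 ≤ Real.exp s := by
        have hh : Real.exp (s / 2) * Real.exp (s / 2) = Real.exp s := by
          rw [← Real.exp_add]; ring_nf
        nlinarith [Real.exp_pos (s / 2)]
      have hts : t = c + ε * s := by rw [hs, mul_div_assoc', mul_div_cancel_left₀ _ hε.ne']; ring
      have hcc : c ≤ |c| := le_abs_self c
      have key : 2 * a * ε * s ≤ 4 * a ^ 2 * ε ^ 2 / K + K * s ^ 2 / 4 := by
        rw [← sub_nonneg]
        have heq : 4 * a ^ 2 * ε ^ 2 / K + K * s ^ 2 / 4 - 2 * a * ε * s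
            = (K * s - 4 * a * ε) ^ 2 / (4 * K) := by field_simp; ring
        rw [heq]; positivity
      have h3 := mul_le_mul_of_nonneg_left h2 hK.le
      nlinarith [mul_nonneg hK.le hs0]

/-- Coercivity of the LP dual function: if `A` has full row rank and
there exists `x₀ > 0` componentwise with `A·x₀ = b`, then `−G_ε` is coercive,
i.e. `G_ε(λ) → −∞` as `‖λ‖ → +∞`, where
`G_ε(λ) = b·λ − (ε/e)·∑ᵢ exp((Aᵀλ − c)ᵢ/ε)`. -/
theorem dual_function_coercive {m d : ℕ} (ε : ℝ) (hε : 0 < ε)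
    (A : Matrix (Fin m) (Fin d) ℝ) (b : Fin m → ℝ) (c : Fin d → ℝ)
    (hrank : A.rank = m)
    (x0 : Fin d → ℝ) (hx0pos : ∀ i, 0 < x0 i) (hx0feas : A.mulVec x0 = b)
    (G : (Fin m → ℝ) → ℝ)
    (hG : ∀ lam, G lam =
      b ⬝ᵥ lam - (ε / Real.exp 1) * ∑ i, Real.exp ((Aᵀ.mulVec lam - c) i / ε)) :
    Tendsto G (comap (fun lam => ‖lam‖) atTop) atBot := by
  -- injectivity of Aᵀ.mulVecLin
  have hker : LinearMap.ker Aᵀ.mulVecLin = ⊥ := by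
    have h1 : Aᵀ.rank = m := by rw [Matrix.rank_transpose]; exact hrank
    have h2 := LinearMap.finrank_range_add_finrank_ker (Aᵀ.mulVecLin)
    rw [Module.finrank_pi] at h2
    have h3 : Module.finrank ℝ (LinearMap.range Aᵀ.mulVecLin) = m := h1
    rw [Fintype.card_fin] at h2
    have h4 : Module.finrank ℝ (LinearMap.ker Aᵀ.mulVecLin) = 0 := by omega
    exact Submodule.finrank_eq_zero.mp h4
  obtain ⟨Kl, hKl, hanti⟩ := LinearMap.exists_antilipschitzWith _ hker
  have hKl' : (0:ℝ) < Kl := hKl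
  -- lower bound on x0
  obtain ⟨α, hα, hαle⟩ : ∃ α > 0, ∀ i, α ≤ x0 i := by
    rcases Nat.eq_zero_or_pos d with hd | hd
    · exact ⟨1, one_pos, fun i => absurd (Fin.pos_iff_nonempty.mpr ⟨i⟩) (by omega)⟩
    · have : Nonempty (Fin d) := Fin.pos_iff_nonempty.mp hd
      obtain ⟨j, hj⟩ := Finset.exists_min_image Finset.univ x0 ⟨Classical.arbitrary _, Finset.mem_univ _⟩
      exact ⟨x0 j, hx0pos j, fun i => hj.2 i (Finset.mem_univ i)⟩
  set K : ℝ := ε / Real.exp 1 with hKdef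
  have hKpos : 0 < K := div_pos hε (Real.exp_pos 1)
  set C : ℝ := ∑ i, (2 * x0 i * |c i| + 4 * (x0 i) ^ 2 * ε ^ 2 / K) with hC
  set δ : ℝ := α / Kl with hδ
  have hδ0 : 0 < δ := div_pos hα hKl'
  have hbound : ∀ lam, G lam ≤ C - δ * ‖lam‖ := by
    intro lam
    set y : Fin d → ℝ := Aᵀ.mulVec lam with hy
    -- rewrite G
    have hb : b ⬝ᵥ lam = ∑ i, x0 i * y i := by
      rw [← hx0feas, dotProduct_comm, dotProduct_mulVec, hy, mulVec_transpose,
        dotProduct_comm]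
      simp [dotProduct]
    have hGlam : G lam = ∑ i, (x0 i * y i - K * Real.exp ((y i - c i) / ε)) := by
      rw [hG, hb, Finset.mul_sum, ← Finset.sum_sub_distrib]
      rfl
    -- coordinatewise bound
    have h1 : G lam ≤ C - ∑ i, α * |y i| := by
      rw [hGlam, hC, ← Finset.sum_sub_distrib]
      apply Finset.sum_le_sum
      intro i _
      have := key_ineq (x0 i) K ε (c i) (y i) (hx0pos i) hKpos hε
      have h2 : α * |y i| ≤ x0 i * |y i| :=
        mul_le_mul_of_nonneg_right (hαle i) (abs_nonneg _)
      linarith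
    -- ∑ |y i| ≥ ‖y‖
    have h2 : ‖y‖ ≤ ∑ i, |y i| := by
      refine (pi_norm_le_iff_of_nonneg (Finset.sum_nonneg fun i _ => abs_nonneg _)).mpr fun i => ?_
      exact Finset.single_le_sum (f := fun i => |y i|) (fun j _ => abs_nonneg _) (Finset.mem_univ i)
    -- ‖lam‖ ≤ Kl * ‖y‖
    have h3 : ‖lam‖ ≤ Kl * ‖y‖ := by
      have := hanti.le_mul_dist lam 0
      simpa [dist_eq_norm, hy, Matrix.mulVec_transpose] using this
    have h4 : δ * ‖lam‖ ≤ α * ‖y‖ := by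
      rw [hδ, div_mul_eq_mul_div, div_le_iff₀ hKl']
      calc α * ‖lam‖ ≤ α * (Kl * ‖y‖) := by
            exact mul_le_mul_of_nonneg_left h3 hα.le
        _ = α * ‖y‖ * Kl := by ring
    have h5 : α * ‖y‖ ≤ ∑ i, α * |y i| := by
      rw [← Finset.mul_sum]
      exact mul_le_mul_of_nonneg_left h2 hα.le
    linarith
  -- conclude
  have hnorm : Tendsto (fun lam : Fin m → ℝ => ‖lam‖) (comap (fun lam => ‖lam‖) atTop) atTop :=
    tendsto_comap
  have hlin : Tendsto (fun lam : Fin m → ℝ => C - δ * ‖lam‖) (comap (fun lam => ‖lam‖) atTop) atBot := by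
    have h1 : Tendsto (fun lam : Fin m → ℝ => δ * ‖lam‖) (comap (fun lam => ‖lam‖) atTop) atTop :=
      hnorm.const_mul_atTop hδ0
    have h2 : Tendsto (fun lam : Fin m → ℝ => -(δ * ‖lam‖)) (comap (fun lam => ‖lam‖) atTop) atBot :=
      tendsto_neg_atTop_atBot.comp h1
    simpa [sub_eq_add_neg] using tendsto_atBot_add_const_left _ C h2
  exact tendsto_atBot_mono hbound hlin
end

section
/- (Strong duality for the entropy-regularized LP.) Let ε > 0, let A be an m×d real matrix of full row rank, b ∈ ℝ^m, c ∈ ℝ^d. Assume there exists λ₀ with Aᵀλ₀ > 0 componentwise and there exists x₀ > 0 componentwise with A·x₀ = b. Then G_ε attains its maximum on ℝ^m at a unique point λ*, the point x*(λ*) with coordinates x*(λ*)_i = exp((Aᵀλ* − c)_i/ε − 1) satisfies A·x*(λ*) = b and is the unique minimizer of P_ε (in particular the minimizer of P_ε is componentwise strictly positive), and τ_ε = max_{λ∈ℝ^m} G_ε(λ) = b·λ* − ε·Σ_{i=1}^d x*(λ*)_i. -/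
open Matrix Real Filter

lemma key_ineq_s6 (x s : ℝ) (hx : 0 ≤ x) :
    x * s + x - x * Real.log x ≤ Real.exp s := by
  rcases eq_or_lt_of_le hx with h | h
  · rw [← h]; simpa using (Real.exp_pos s).le
  · have h1 : (s - Real.log x) + 1 ≤ Real.exp (s - Real.log x) := Real.add_one_le_exp _
    have h2 : x * Real.exp (s - Real.log x) = Real.exp s := by
      rw [Real.exp_sub, Real.exp_log h]; field_simp
    nlinarith

lemma key_strict_s6 (x s : ℝ) (hx : 0 ≤ x) (hne : x ≠ Real.exp s) :
    x * s + x - x * Real.log x < Real.exp s := by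
  rcases eq_or_lt_of_le hx with h | h
  · rw [← h]; simpa using Real.exp_pos s
  · have hne' : s - Real.log x ≠ 0 := by
      intro h0
      exact hne (by rw [show s = Real.log x by linarith, Real.exp_log h])
    have h1 : (s - Real.log x) + 1 < Real.exp (s - Real.log x) := Real.add_one_lt_exp hne'
    have h2 : x * Real.exp (s - Real.log x) = Real.exp s := by
      rw [Real.exp_sub, Real.exp_log h]; field_simp
    nlinarith

lemma inj_aux {m d : ℕ} (A : Matrix (Fin m) (Fin d) ℝ) (hrank : A.rank = m) :
    LinearMap.ker (Aᵀ.mulVecLin) = ⊥ := by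
  have h1 : Aᵀ.rank = m := by rw [Matrix.rank_transpose]; exact hrank
  have h2 := LinearMap.finrank_range_add_finrank_ker (Aᵀ.mulVecLin)
  rw [Matrix.rank] at h1
  rw [h1, Module.finrank_fin_fun] at h2
  have h3 : Module.finrank ℝ (LinearMap.ker Aᵀ.mulVecLin) = 0 := by omega
  exact Submodule.finrank_eq_zero.mp h3

lemma antilip_aux {m d : ℕ} (A : Matrix (Fin m) (Fin d) ℝ) (hrank : A.rank = m) :
    ∃ K : ℝ, 0 < K ∧ ∀ lam : Fin m → ℝ, ‖lam‖ ≤ K * ‖Aᵀ.mulVec lam‖ := by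
  obtain ⟨K, hK, hanti⟩ := (Aᵀ.mulVecLin).exists_antilipschitzWith (inj_aux A hrank)
  refine ⟨K, by exact_mod_cast hK, fun lam => ?_⟩
  have := hanti.le_mul_dist lam 0
  simpa [Matrix.mulVecLin, dist_eq_norm, Matrix.mulVec_transpose] using this

lemma phi_atTop (a β γ δ : ℝ) (hβ : 0 < β) (hγ : 0 < γ) :
    Tendsto (fun t => a * t - β * Real.exp (γ * t + δ)) atTop atBot := by
  have h0 : Tendsto (fun t : ℝ => t * Real.exp (-γ * t)) atTop (nhds 0) := by
    have := tendsto_rpow_mul_exp_neg_mul_atTop_nhds_zero 1 γ hγ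
    refine this.congr' ?_
    filter_upwards [eventually_gt_atTop 0] with t ht
    rw [Real.rpow_one]
  have h1 : Tendsto (fun t : ℝ => Real.exp (γ * t + δ)) atTop atTop :=
    Real.tendsto_exp_atTop.comp
      (tendsto_atTop_add_const_right _ δ (tendsto_id.const_mul_atTop hγ))
  have h2 : Tendsto (fun t : ℝ => a * (t * Real.exp (-γ * t)) * Real.exp (-δ) - β)
      atTop (nhds (-β)) := by
    have : Tendsto (fun t : ℝ => a * (t * Real.exp (-γ * t)) * Real.exp (-δ)) atTop (nhds 0) := by
      have := (h0.const_mul a).mul_const (Real.exp (-δ))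
      simpa using this
    simpa using this.sub_const β
  have h3 := h1.atTop_mul_neg (by linarith : -β < 0) h2
  refine h3.congr (fun t => ?_)
  have e1 : Real.exp (γ * t + δ) * Real.exp (-γ * t) * Real.exp (-δ) = 1 := by
    rw [← Real.exp_add, ← Real.exp_add, show γ * t + δ + -γ * t + -δ = 0 by ring, Real.exp_zero]
  linear_combination (a * t) * e1

lemma phi_bound (a β γ δ N : ℝ) (ha : 0 < a) (hβ : 0 < β) (hγ : 0 < γ) :
    ∃ R : ℝ, 0 < R ∧ ∀ t : ℝ, R ≤ |t| → a * t - β * Real.exp (γ * t + δ) ≤ N := by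
  have hbot : Tendsto (fun t => a * t - β * Real.exp (γ * t + δ)) atBot atBot := by
    refine tendsto_atBot_mono (fun t => ?_) (tendsto_id.const_mul_atBot ha)
    have := Real.exp_pos (γ * t + δ)
    simp only [id]
    nlinarith
  obtain ⟨R1, hR1⟩ := eventually_atBot.mp (hbot.eventually (eventually_le_atBot N))
  obtain ⟨R2, hR2⟩ :=
    eventually_atTop.mp ((phi_atTop a β γ δ hβ hγ).eventually (eventually_le_atBot N))
  refine ⟨max (max R2 (-R1)) 1, lt_of_lt_of_le one_pos (le_max_right _ _), fun t ht => ?_⟩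
  rcases le_abs.mp ht with h' | h'
  · exact hR2 t (le_trans ((le_max_left R2 (-R1)).trans (le_max_left _ 1)) h')
  · refine hR1 t ?_
    have : -R1 ≤ -t := le_trans ((le_max_right R2 (-R1)).trans (le_max_left _ 1)) h'
    linarith

/-- Strong duality for the entropy-regularized LP: under full row
rank of `A`, existence of `λ₀` with `Aᵀλ₀ > 0` and of `x₀ > 0` with `Ax₀ = b`,
the dual function `G_ε` attains its maximum on `ℝ^m` at a unique point `λ*`;
the point `x*(λ*)` with `x*(λ*)ᵢ = exp((Aᵀλ* − c)ᵢ/ε − 1)` satisfies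
`A·x*(λ*) = b`, is componentwise strictly positive, and is the unique minimizer
of `P_ε`; and `τ_ε = max_λ G_ε(λ) = b·λ* − ε·∑ᵢ x*(λ*)ᵢ`. -/
theorem strong_duality_entropy_LP {m d : ℕ} (ε : ℝ) (hε : 0 < ε)
    (A : Matrix (Fin m) (Fin d) ℝ) (b : Fin m → ℝ) (c : Fin d → ℝ)
    (hrank : A.rank = m)
    (lam0 : Fin m → ℝ) (hlam0 : ∀ i, 0 < Aᵀ.mulVec lam0 i)
    (x0 : Fin d → ℝ) (hx0pos : ∀ i, 0 < x0 i) (hx0feas : A.mulVec x0 = b)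
    (G : (Fin m → ℝ) → ℝ)
    (hG : ∀ lam, G lam =
      b ⬝ᵥ lam - (ε / Real.exp 1) * ∑ i, Real.exp ((Aᵀ.mulVec lam - c) i / ε))
    (xstar : (Fin m → ℝ) → Fin d → ℝ)
    (hx : ∀ lam i, xstar lam i = Real.exp ((Aᵀ.mulVec lam - c) i / ε - 1))
    (Ω : Set (Fin d → ℝ))
    (hΩ : Ω = {x : Fin d → ℝ | A.mulVec x = b ∧ ∀ i, 0 ≤ x i})
    (f : (Fin d → ℝ) → ℝ)
    (hf : ∀ x, f x = ∑ i, x i * Real.log (x i))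
    (τ : ℝ) (hτ : τ = sInf ((fun x => c ⬝ᵥ x + ε * f x) '' Ω)) :
    ∃ lamstar : Fin m → ℝ,
      (∀ lam, G lam ≤ G lamstar) ∧
      (∀ lam, (∀ mu, G mu ≤ G lam) → lam = lamstar) ∧
      A.mulVec (xstar lamstar) = b ∧
      (∀ i, 0 < xstar lamstar i) ∧
      xstar lamstar ∈ Ω ∧
      (∀ y ∈ Ω, c ⬝ᵥ xstar lamstar + ε * f (xstar lamstar) ≤ c ⬝ᵥ y + ε * f y) ∧
      (∀ y ∈ Ω, (∀ z ∈ Ω, c ⬝ᵥ y + ε * f y ≤ c ⬝ᵥ z + ε * f z) → y = xstar lamstar) ∧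
      τ = G lamstar ∧
      G lamstar = b ⬝ᵥ lamstar - ε * ∑ i, xstar lamstar i := by
  have hεne : ε ≠ 0 := hε.ne'
  have hexp1 : (0:ℝ) < Real.exp 1 := Real.exp_pos 1
  -- dot product transfer
  have hdotlem : ∀ (x : Fin d → ℝ) (lam : Fin m → ℝ),
      (A.mulVec x) ⬝ᵥ lam = ∑ i, x i * Aᵀ.mulVec lam i := by
    intro x lam
    simp only [Matrix.mulVec, dotProduct, Matrix.transpose_apply, Finset.sum_mul,
      Finset.mul_sum]
    rw [Finset.sum_comm]
    apply Finset.sum_congr rfl; intro i _; apply Finset.sum_congr rfl; intro k _; ring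
  -- slack identity
  have hslack : ∀ (lam : Fin m → ℝ) (x : Fin d → ℝ), A.mulVec x = b →
      c ⬝ᵥ x + ε * f x - G lam =
      ∑ i, ε * (Real.exp ((Aᵀ.mulVec lam - c) i / ε - 1) -
        (x i * ((Aᵀ.mulVec lam - c) i / ε - 1) + x i - x i * Real.log (x i))) := by
    intro lam x hxb
    have hbl : b ⬝ᵥ lam = ∑ i, x i * Aᵀ.mulVec lam i := by rw [← hxb]; exact hdotlem x lam
    have hterm : ∀ u xi : ℝ,
        ε * (Real.exp (u / ε - 1) - (xi * (u / ε - 1) + xi - xi * Real.log xi))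
        = ε * (xi * Real.log xi) - xi * u + (ε / Real.exp 1) * Real.exp (u / ε) := by
      intro u xi
      rw [Real.exp_sub]
      field_simp
      ring
    have hsum : ∑ i, ε * (Real.exp ((Aᵀ.mulVec lam - c) i / ε - 1) -
          (x i * ((Aᵀ.mulVec lam - c) i / ε - 1) + x i - x i * Real.log (x i)))
        = ε * f x - ∑ i, x i * ((Aᵀ.mulVec lam - c) i)
          + (ε / Real.exp 1) * ∑ i, Real.exp ((Aᵀ.mulVec lam - c) i / ε) := by
      rw [hf, Finset.mul_sum, Finset.mul_sum, ← Finset.sum_sub_distrib, ← Finset.sum_add_distrib]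
      exact Finset.sum_congr rfl fun i _ => hterm _ _
    rw [hsum, hG]
    have hsplit : ∑ i, x i * ((Aᵀ.mulVec lam - c) i)
        = (∑ i, x i * Aᵀ.mulVec lam i) - c ⬝ᵥ x := by
      simp only [Pi.sub_apply, mul_sub, Finset.sum_sub_distrib, dotProduct]
      congr 1
      apply Finset.sum_congr rfl; intro i _; ring
    rw [hsplit, ← hbl]
    ring
  -- weak duality
  have hweak : ∀ (lam : Fin m → ℝ) (x : Fin d → ℝ), A.mulVec x = b → (∀ i, 0 ≤ x i) →
      G lam ≤ c ⬝ᵥ x + ε * f x := by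
    intro lam x hxb hxnn
    have h := hslack lam x hxb
    have hsum : 0 ≤ ∑ i, ε * (Real.exp ((Aᵀ.mulVec lam - c) i / ε - 1) -
        (x i * ((Aᵀ.mulVec lam - c) i / ε - 1) + x i - x i * Real.log (x i))) := by
      refine Finset.sum_nonneg fun i _ => ?_
      have := key_ineq_s6 (x i) ((Aᵀ.mulVec lam - c) i / ε - 1) (hxnn i)
      have h0 : (0:ℝ) ≤ Real.exp ((Aᵀ.mulVec lam - c) i / ε - 1) -
          (x i * ((Aᵀ.mulVec lam - c) i / ε - 1) + x i - x i * Real.log (x i)) := by linarith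
      exact mul_nonneg hε.le h0
    linarith
  -- equality case
  have heqcase : ∀ (lam : Fin m → ℝ) (x : Fin d → ℝ), A.mulVec x = b → (∀ i, 0 ≤ x i) →
      G lam = c ⬝ᵥ x + ε * f x →
      ∀ i, x i = Real.exp ((Aᵀ.mulVec lam - c) i / ε - 1) := by
    intro lam x hxb hxnn heq i
    by_contra hne
    have hstrict := key_strict_s6 (x i) ((Aᵀ.mulVec lam - c) i / ε - 1) (hxnn i) hne
    have h := hslack lam x hxb
    have hpos : 0 < ∑ i, ε * (Real.exp ((Aᵀ.mulVec lam - c) i / ε - 1) -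
        (x i * ((Aᵀ.mulVec lam - c) i / ε - 1) + x i - x i * Real.log (x i))) := by
      refine Finset.sum_pos' (fun k _ => ?_) ⟨i, Finset.mem_univ i, ?_⟩
      · have := key_ineq_s6 (x k) ((Aᵀ.mulVec lam - c) k / ε - 1) (hxnn k)
        have h0 : (0:ℝ) ≤ Real.exp ((Aᵀ.mulVec lam - c) k / ε - 1) -
            (x k * ((Aᵀ.mulVec lam - c) k / ε - 1) + x k - x k * Real.log (x k)) := by linarith
        exact mul_nonneg hε.le h0
      · have h0 : (0:ℝ) < Real.exp ((Aᵀ.mulVec lam - c) i / ε - 1) -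
            (x i * ((Aᵀ.mulVec lam - c) i / ε - 1) + x i - x i * Real.log (x i)) := by linarith
        exact mul_pos hε h0
    linarith
  -- continuity of G
  have hGcont : Continuous G := by
    have hGeq : G = fun lam =>
        b ⬝ᵥ lam - (ε / Real.exp 1) * ∑ i, Real.exp ((Aᵀ.mulVec lam - c) i / ε) := funext hG
    rw [hGeq]
    apply Continuous.sub
    · show Continuous fun lam : Fin m → ℝ => ∑ i, b i * lam i
      exact continuous_finset_sum _ fun i _ => continuous_const.mul (continuous_apply i)
    · apply Continuous.mul continuous_const
      apply continuous_finset_sum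
      intro i _
      apply Real.continuous_exp.comp
      apply Continuous.div_const
      apply Continuous.sub _ continuous_const
      show Continuous fun lam : Fin m → ℝ => ∑ k, Aᵀ i k * lam k
      exact continuous_finset_sum _ fun k _ => continuous_const.mul (continuous_apply k)
  -- existence of a maximizer
  have hexists : ∃ lamstar : Fin m → ℝ, ∀ lam, G lam ≤ G lamstar := by
    rcases Nat.eq_zero_or_pos m with hm | hm
    · subst hm
      exact ⟨0, fun lam => le_of_eq (congrArg G (Subsingleton.elim lam 0))⟩
    · -- coercivity
      obtain ⟨K, hK, hKle⟩ := antilip_aux A hrank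
      have hd : 0 < d := by
        have := A.rank_le_width
        omega
      -- per-coordinate bound B
      have hBbd : ∀ (i : Fin d) (t : ℝ),
          x0 i * t - (ε / Real.exp 1) * Real.exp ((t - c i) / ε) ≤
            x0 i * c i + ε * (x0 i * Real.log (x0 i)) := by
        intro i t
        have h := key_ineq_s6 (x0 i) ((t - c i) / ε - 1) (hx0pos i).le
        rw [Real.exp_sub] at h
        have h2 := mul_le_mul_of_nonneg_left h hε.le
        have h4 : x0 i * (t - c i - ε) + ε * x0 i - ε * (x0 i * Real.log (x0 i))
            ≤ ε * (Real.exp ((t - c i) / ε) / Real.exp 1) := by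
          refine le_trans (le_of_eq ?_) h2
          field_simp
        rw [div_mul_eq_mul_div]
        rw [mul_div_assoc'] at h4
        linarith [h4]
      have hGsum : ∀ lam : Fin m → ℝ, G lam = ∑ i,
          (x0 i * Aᵀ.mulVec lam i -
            (ε / Real.exp 1) * Real.exp ((Aᵀ.mulVec lam i - c i) / ε)) := by
        intro lam
        rw [hG]
        have hbl : b ⬝ᵥ lam = ∑ i, x0 i * Aᵀ.mulVec lam i := by
          rw [← hx0feas]; exact hdotlem x0 lam
        rw [hbl, Finset.mul_sum, ← Finset.sum_sub_distrib]
        apply Finset.sum_congr rfl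
        intro i _
        simp only [Pi.sub_apply]
      -- radius from phi_bound
      have hβpos : (0:ℝ) < ε / Real.exp 1 := div_pos hε hexp1
      have hγpos : (0:ℝ) < 1 / ε := by positivity
      set C : ℝ := ∑ i, |x0 i * c i + ε * (x0 i * Real.log (x0 i))| with hC
      have hRex : ∀ i : Fin d, ∃ R : ℝ, 0 < R ∧ ∀ t : ℝ, R ≤ |t| →
          x0 i * t - (ε / Real.exp 1) * Real.exp ((t - c i) / ε) ≤ G 0 - C := by
        intro i
        obtain ⟨R, hRpos, hR⟩ := phi_bound (x0 i) (ε / Real.exp 1) (1 / ε) (-(c i) / ε)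
          (G 0 - C) (hx0pos i) hβpos hγpos
        refine ⟨R, hRpos, fun t ht => ?_⟩
        have := hR t ht
        rwa [show 1 / ε * t + -(c i) / ε = (t - c i) / ε by field_simp; ring] at this
      choose R hRpos hR using hRex
      set Rtot : ℝ := ∑ i, R i with hRtot
      have hRtot_pos : 0 < Rtot := Finset.sum_pos (fun i _ => hRpos i) ⟨⟨0, hd⟩, Finset.mem_univ _⟩
      have hRtot_ge : ∀ i, R i ≤ Rtot :=
        fun i => Finset.single_le_sum (fun k _ => (hRpos k).le) (Finset.mem_univ i)
      -- eventual bound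
      have hev : ∀ᶠ lam in cocompact (Fin m → ℝ), G lam ≤ G 0 := by
        rw [Filter.eventually_iff, Filter.mem_cocompact]
        refine ⟨Metric.closedBall 0 (K * Rtot), isCompact_closedBall _ _, fun lam hlam => ?_⟩
        simp only [Set.mem_compl_iff, Metric.mem_closedBall, dist_zero_right, not_le,
          Set.mem_setOf_eq] at hlam ⊢
        set v : Fin d → ℝ := Aᵀ.mulVec lam with hv
        have hnv : Rtot < ‖v‖ := by
          have h1 := hKle lam
          nlinarith
        obtain ⟨j, -, hj⟩ := Finset.exists_max_image Finset.univ (fun i => |v i|)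
          ⟨⟨0, hd⟩, Finset.mem_univ _⟩
        have hvj : Rtot < |v j| := by
          refine lt_of_lt_of_le hnv ?_
          refine (pi_norm_le_iff_of_nonneg (abs_nonneg _)).mpr fun i => ?_
          rw [Real.norm_eq_abs]
          exact hj i (Finset.mem_univ i)
        have hφj : x0 j * v j - (ε / Real.exp 1) * Real.exp ((v j - c j) / ε) ≤ G 0 - C :=
          hR j (v j) ((hRtot_ge j).trans hvj.le)
        have hsum_erase : ∑ i ∈ Finset.univ.erase j,
            (x0 i * v i - (ε / Real.exp 1) * Real.exp ((v i - c i) / ε)) ≤ C := by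
          calc ∑ i ∈ Finset.univ.erase j,
              (x0 i * v i - (ε / Real.exp 1) * Real.exp ((v i - c i) / ε))
              ≤ ∑ i ∈ Finset.univ.erase j, |x0 i * c i + ε * (x0 i * Real.log (x0 i))| := by
                refine Finset.sum_le_sum fun i _ => ?_
                exact (hBbd i (v i)).trans (le_abs_self _)
            _ ≤ ∑ i, |x0 i * c i + ε * (x0 i * Real.log (x0 i))| := by
                refine Finset.sum_le_sum_of_subset_of_nonneg (Finset.erase_subset _ _)
                  fun i _ _ => abs_nonneg _
            _ = C := rfl
        have hsplit := Finset.sum_erase_add Finset.univ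
          (fun i => x0 i * v i - (ε / Real.exp 1) * Real.exp ((v i - c i) / ε))
          (Finset.mem_univ j)
        rw [hGsum lam]
        calc ∑ i, (x0 i * v i - (ε / Real.exp 1) * Real.exp ((v i - c i) / ε))
            = (∑ i ∈ Finset.univ.erase j,
                (x0 i * v i - (ε / Real.exp 1) * Real.exp ((v i - c i) / ε)))
              + (x0 j * v j - (ε / Real.exp 1) * Real.exp ((v j - c j) / ε)) := hsplit.symm
          _ ≤ C + (G 0 - C) := add_le_add hsum_erase hφj
          _ = G 0 := by ring
      exact hGcont.exists_forall_ge' 0 hev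
  obtain ⟨lamstar, hmax⟩ := hexists
  -- stationarity: A (xstar lamstar) = b
  have hfeas : A.mulVec (xstar lamstar) = b := by
    funext j
    set p : Fin d → ℝ := fun i => (Aᵀ.mulVec lamstar - c) i with hp
    have hcomp : ∀ (t : ℝ) (i : Fin d),
        (Aᵀ.mulVec (lamstar + t • (Pi.single j 1 : Fin m → ℝ)) - c) i = p i + t * A j i := by
      intro t i
      rw [Matrix.mulVec_add, Matrix.mulVec_smul, Matrix.mulVec_single]
      simp only [Pi.sub_apply, Pi.add_apply, Pi.smul_apply, smul_eq_mul, hp,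
        Matrix.transpose_apply, mul_one, MulOpposite.op_one, one_smul, Matrix.col_apply]
      ring
    have hdot : ∀ t : ℝ, b ⬝ᵥ (lamstar + t • (Pi.single j 1 : Fin m → ℝ))
        = b ⬝ᵥ lamstar + t * b j := by
      intro t
      rw [dotProduct_add, dotProduct_smul, dotProduct_single, smul_eq_mul,
        mul_one]
    have hrepr : ∀ t : ℝ, G (lamstar + t • (Pi.single j 1 : Fin m → ℝ)) =
        (b ⬝ᵥ lamstar + t * b j) - (ε / Real.exp 1) * ∑ i, Real.exp ((p i + t * A j i) / ε) := by
      intro t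
      rw [hG, hdot]
      congr 2
      exact Finset.sum_congr rfl fun i _ => by rw [hcomp]
    set g : ℝ → ℝ := fun t => G (lamstar + t • (Pi.single j 1 : Fin m → ℝ)) with hg
    have hderiv : HasDerivAt g
        (b j - (ε / Real.exp 1) * ∑ i, Real.exp ((p i + 0 * A j i) / ε) * (A j i / ε)) 0 := by
      have h1 : HasDerivAt (fun t : ℝ => b ⬝ᵥ lamstar + t * b j) (b j) 0 :=
        (hasDerivAt_mul_const (b j)).const_add _
      have h2 : ∀ i ∈ Finset.univ, HasDerivAt (fun t : ℝ => Real.exp ((p i + t * A j i) / ε))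
          (Real.exp ((p i + 0 * A j i) / ε) * (A j i / ε)) 0 := by
        intro i _
        exact (((hasDerivAt_mul_const (A j i)).const_add (p i)).div_const ε).exp
      have h3 := HasDerivAt.const_mul (ε / Real.exp 1) (HasDerivAt.fun_sum h2)
      have h4 := h1.sub h3
      exact h4.congr_of_eventuallyEq (Filter.Eventually.of_forall fun t => hrepr t)
    have hloc : IsLocalMax g 0 := Filter.Eventually.of_forall fun t => by
      simp only [hg]
      have h0 := hmax (lamstar + t • (Pi.single j 1 : Fin m → ℝ))
      simpa using h0
    have hz := hloc.deriv_eq_zero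
    rw [hderiv.deriv] at hz
    have hconv : (ε / Real.exp 1) * ∑ i, Real.exp ((p i + 0 * A j i) / ε) * (A j i / ε)
        = ∑ i, A j i * Real.exp (p i / ε) / Real.exp 1 := by
      rw [Finset.mul_sum]
      apply Finset.sum_congr rfl
      intro i _
      rw [show p i + 0 * A j i = p i by ring]
      field_simp
    rw [hconv] at hz
    have hAx : A.mulVec (xstar lamstar) j = ∑ i, A j i * Real.exp (p i / ε) / Real.exp 1 := by
      simp only [Matrix.mulVec, dotProduct]
      apply Finset.sum_congr rfl
      intro i _
      rw [hx, Real.exp_sub]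
      simp only [hp, Pi.sub_apply]
      ring
    rw [hAx]
    linarith [hz]
  -- positivity and membership
  have hxpos : ∀ i, 0 < xstar lamstar i := fun i => by rw [hx]; exact Real.exp_pos _
  have hxsΩ : xstar lamstar ∈ Ω := by
    rw [hΩ]; exact ⟨hfeas, fun i => (hxpos i).le⟩
  -- equality at the optimum
  have heqopt : G lamstar = c ⬝ᵥ xstar lamstar + ε * f (xstar lamstar) := by
    have h := hslack lamstar (xstar lamstar) hfeas
    have hzero : ∑ i, ε * (Real.exp ((Aᵀ.mulVec lamstar - c) i / ε - 1) -
        (xstar lamstar i * ((Aᵀ.mulVec lamstar - c) i / ε - 1) + xstar lamstar i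
          - xstar lamstar i * Real.log (xstar lamstar i))) = 0 := by
      refine Finset.sum_eq_zero fun i _ => ?_
      rw [hx lamstar i, Real.log_exp]
      ring
    linarith
  -- minimizer property
  have hmin : ∀ y ∈ Ω, c ⬝ᵥ xstar lamstar + ε * f (xstar lamstar) ≤ c ⬝ᵥ y + ε * f y := by
    intro y hy
    rw [hΩ] at hy
    rw [← heqopt]
    exact hweak lamstar y hy.1 hy.2
  refine ⟨lamstar, hmax, ?_, hfeas, hxpos, hxsΩ, hmin, ?_, ?_, ?_⟩
  · -- uniqueness of maximizer
    intro lam hlam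
    have hGeq : G lam = G lamstar := le_antisymm (hmax lam) (hlam lamstar)
    have heq2 : G lam = c ⬝ᵥ xstar lamstar + ε * f (xstar lamstar) := by
      rw [hGeq, heqopt]
    have hxe := heqcase lam (xstar lamstar) hfeas (fun i => (hxpos i).le) heq2
    have hveq : Aᵀ.mulVec lam = Aᵀ.mulVec lamstar := by
      funext i
      have h1 := hxe i
      rw [hx lamstar i] at h1
      have h2 := Real.exp_injective h1.symm
      field_simp at h2
      simp only [Pi.sub_apply] at h2
      linarith [h2]
    have hinj : Function.Injective (Aᵀ.mulVecLin) :=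
      LinearMap.ker_eq_bot.mp (inj_aux A hrank)
    have : Aᵀ.mulVecLin lam = Aᵀ.mulVecLin lamstar := by
      rw [Matrix.mulVecLin_apply, Matrix.mulVecLin_apply]; exact hveq
    exact hinj this
  · -- uniqueness of minimizer
    intro y hy hymin
    have hy' := hy
    rw [hΩ] at hy'
    have h1 : c ⬝ᵥ y + ε * f y ≤ c ⬝ᵥ xstar lamstar + ε * f (xstar lamstar) :=
      hymin (xstar lamstar) hxsΩ
    have h2 : c ⬝ᵥ xstar lamstar + ε * f (xstar lamstar) ≤ c ⬝ᵥ y + ε * f y := hmin y hy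
    have heqy : G lamstar = c ⬝ᵥ y + ε * f y := by rw [heqopt]; linarith
    have hxe := heqcase lamstar y hy'.1 hy'.2 heqy
    funext i
    rw [hxe i, hx lamstar i]
  · -- τ = G lamstar
    rw [hτ]
    have hmem : G lamstar ∈ (fun x => c ⬝ᵥ x + ε * f x) '' Ω :=
      ⟨xstar lamstar, hxsΩ, heqopt.symm⟩
    have hlb : ∀ y ∈ (fun x => c ⬝ᵥ x + ε * f x) '' Ω, G lamstar ≤ y := by
      rintro y ⟨x, hxΩ, rfl⟩
      rw [hΩ] at hxΩ
      exact hweak lamstar x hxΩ.1 hxΩ.2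
    exact le_antisymm (csInf_le ⟨G lamstar, hlb⟩ hmem) (le_csInf ⟨G lamstar, hmem⟩ hlb)
  · -- final formula
    rw [hG]
    congr 1
    rw [Finset.mul_sum, Finset.mul_sum]
    apply Finset.sum_congr rfl
    intro i _
    rw [hx lamstar i, Real.exp_sub]
    ring
end

section
/- (Asymptotics of the regularized LP solutions.) Let A be an m×d real matrix, b ∈ ℝ^m, c ∈ ℝ^d, with Ω = { x : Ax = b, x ≥ 0 } nonempty and compact. For each ε > 0 let x*(ε) be the unique minimizer of c·x + ε·f(x) over Ω. Then for every sequence ε_k ↓ 0, the sequence x*(ε_k) converges to the unique point x* of the set S = argmin{ c·x : x ∈ Ω } that minimizes the Boltzmann–Shannon entropy f over S. -/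
open Matrix Real Filter Topology

/-- Asymptotics of the regularized LP solutions: with
`Ω = {x : Ax = b, x ≥ 0}` nonempty compact and, for each `ε > 0`, `x*(ε)` the
unique minimizer of `c·x + ε·f(x)` over `Ω` (`f(x) = ∑ᵢ xᵢ ln xᵢ`), for every
sequence `ε_k ↓ 0` the sequence `x*(ε_k)` converges to the unique point of
`S = argmin{c·x : x ∈ Ω}` minimizing the entropy `f` over `S`. -/
theorem regularized_LP_solutions_converge {m d : ℕ}
    (A : Matrix (Fin m) (Fin d) ℝ) (b : Fin m → ℝ) (c : Fin d → ℝ)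
    (Ω : Set (Fin d → ℝ))
    (hΩ : Ω = {x : Fin d → ℝ | A.mulVec x = b ∧ ∀ i, 0 ≤ x i})
    (hne : Ω.Nonempty) (hcpt : IsCompact Ω)
    (f : (Fin d → ℝ) → ℝ)
    (hf : ∀ x, f x = ∑ i, x i * Real.log (x i))
    (xε : ℝ → Fin d → ℝ)
    (hxε : ∀ ε : ℝ, 0 < ε → xε ε ∈ Ω ∧
      (∀ y ∈ Ω, c ⬝ᵥ xε ε + ε * f (xε ε) ≤ c ⬝ᵥ y + ε * f y) ∧
      (∀ y ∈ Ω, (∀ z ∈ Ω, c ⬝ᵥ y + ε * f y ≤ c ⬝ᵥ z + ε * f z) → y = xε ε))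
    (S : Set (Fin d → ℝ))
    (hS : S = {x ∈ Ω | ∀ y ∈ Ω, c ⬝ᵥ x ≤ c ⬝ᵥ y}) :
    ∃ xstar : Fin d → ℝ,
      (xstar ∈ S ∧ ∀ y ∈ S, f xstar ≤ f y) ∧
      (∀ y, (y ∈ S ∧ ∀ z ∈ S, f y ≤ f z) → y = xstar) ∧
      ∀ εk : ℕ → ℝ, (∀ k, 0 < εk k) → Antitone εk → Tendsto εk atTop (𝓝 0) →
        Tendsto (fun k => xε (εk k)) atTop (𝓝 xstar) := by
  classical
  have hfe : f = fun x : Fin d → ℝ => ∑ i, x i * Real.log (x i) := funext hf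
  have hfc : Continuous f := by
    rw [hfe]
    exact continuous_finset_sum _ fun i _ =>
      Real.continuous_mul_log.comp (continuous_apply i)
  have hcc : Continuous fun x : Fin d → ℝ => c ⬝ᵥ x := by
    simp only [dotProduct]
    exact continuous_finset_sum _ fun i _ => continuous_const.mul (continuous_apply i)
  -- S is nonempty and compact
  obtain ⟨x1, hx1Ω, hx1min'⟩ := hcpt.exists_isMinOn hne hcc.continuousOn
  have hx1min := isMinOn_iff.mp hx1min'
  have hx1S : x1 ∈ S := by rw [hS]; exact ⟨hx1Ω, hx1min⟩
  have hSeq : S = Ω ∩ {x | c ⬝ᵥ x ≤ c ⬝ᵥ x1} := by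
    rw [hS]; ext x
    constructor
    · rintro ⟨hxΩ, hx⟩; exact ⟨hxΩ, hx x1 hx1Ω⟩
    · rintro ⟨hxΩ, hx⟩; exact ⟨hxΩ, fun y hy => le_trans hx (hx1min y hy)⟩
  have hScpt : IsCompact S := by
    rw [hSeq]
    exact hcpt.inter_right (isClosed_le hcc continuous_const)
  have hSne : S.Nonempty := ⟨x1, hx1S⟩
  have hSsub : S ⊆ Ω := by rw [hS]; exact fun x hx => hx.1
  -- minimizer of f on S
  obtain ⟨xstar, hxS, hxmin'⟩ := hScpt.exists_isMinOn hSne hfc.continuousOn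
  have hxmin := isMinOn_iff.mp hxmin'
  have hxSmem : xstar ∈ Ω ∧ ∀ y ∈ Ω, c ⬝ᵥ xstar ≤ c ⬝ᵥ y := by rw [hS] at hxS; exact hxS
  -- nonnegativity on Ω
  have hΩnn : ∀ x ∈ Ω, ∀ i, (0:ℝ) ≤ x i := by
    intro x hx; rw [hΩ] at hx; exact hx.2
  -- uniqueness of the entropy minimizer on S
  have huniq : ∀ y, (y ∈ S ∧ ∀ z ∈ S, f y ≤ f z) → y = xstar := by
    intro y ⟨hyS, hymin⟩
    by_contra hne'
    -- midpoint
    set z : Fin d → ℝ := (1/2 : ℝ) • y + (1/2 : ℝ) • xstar with hz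
    have hyΩ := hSsub hyS
    have hxΩ := hSsub hxS
    have hySmem : y ∈ Ω ∧ ∀ w ∈ Ω, c ⬝ᵥ y ≤ c ⬝ᵥ w := by rw [hS] at hyS; exact hyS
    have hzΩ : z ∈ Ω := by
      rw [hΩ] at hyΩ hxΩ ⊢
      constructor
      · simp [hz, Matrix.mulVec_add, Matrix.mulVec_smul, hyΩ.1, hxΩ.1, ← smul_add]
        norm_num [hyΩ.1, hxΩ.1, smul_add]
        rw [← add_smul]
        norm_num
      · intro i
        simp only [hz, Pi.add_apply, Pi.smul_apply, smul_eq_mul]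
        have := hyΩ.2 i; have := hxΩ.2 i; linarith
    have hzdot : c ⬝ᵥ z = (1/2 : ℝ) * (c ⬝ᵥ y) + (1/2 : ℝ) * (c ⬝ᵥ xstar) := by
      simp [hz, dotProduct_add, dotProduct_smul, smul_eq_mul]
    have hzS : z ∈ S := by
      rw [hS]
      refine ⟨hzΩ, fun w hw => ?_⟩
      rw [hzdot]
      have h1 := hySmem.2 w hw
      have h2 := hxSmem.2 w hw
      linarith
    -- strict convexity of f
    have hfy : f y = f xstar := le_antisymm (hymin xstar hxS) (hxmin y hyS)
    obtain ⟨i0, hi0⟩ : ∃ i, y i ≠ xstar i := by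
      by_contra h; push_neg at h; exact hne' (funext h)
    have hconv := Real.convexOn_mul_log
    have hstrict := Real.strictConvexOn_mul_log
    have hkey : f z < (1/2 : ℝ) * f y + (1/2 : ℝ) * f xstar := by
      rw [hfe]
      simp only
      have hsum : (1/2 : ℝ) * (∑ i, y i * Real.log (y i))
          + (1/2 : ℝ) * (∑ i, xstar i * Real.log (xstar i))
          = ∑ i, ((1/2 : ℝ) * (y i * Real.log (y i))
              + (1/2 : ℝ) * (xstar i * Real.log (xstar i))) := by
        rw [Finset.sum_add_distrib, Finset.mul_sum, Finset.mul_sum]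
      rw [hsum]
      apply Finset.sum_lt_sum
      · intro i _
        have := hconv.2 (Set.mem_Ici.mpr (hΩnn y hyΩ i)) (Set.mem_Ici.mpr (hΩnn xstar hxΩ i))
          (by norm_num : (0:ℝ) ≤ 1/2) (by norm_num : (0:ℝ) ≤ 1/2) (by norm_num)
        simpa [hz, smul_eq_mul] using this
      · refine ⟨i0, Finset.mem_univ i0, ?_⟩
        have := hstrict.2 (Set.mem_Ici.mpr (hΩnn y hyΩ i0))
          (Set.mem_Ici.mpr (hΩnn xstar hxΩ i0)) hi0
          (by norm_num : (0:ℝ) < 1/2) (by norm_num : (0:ℝ) < 1/2) (by norm_num)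
        simpa [hz, smul_eq_mul] using this
    rw [hfy] at hkey
    have : f xstar < f xstar := by
      calc f xstar ≤ f z := hxmin z hzS
        _ < (1/2:ℝ) * f xstar + (1/2:ℝ) * f xstar := hkey
        _ = f xstar := by ring
    exact lt_irrefl _ this
  refine ⟨xstar, ⟨hxS, hxmin⟩, huniq, ?_⟩
  -- convergence
  intro εk hpos _ htend0
  obtain ⟨xL, _, hL'⟩ := hcpt.exists_isMinOn hne hfc.continuousOn
  have hL := isMinOn_iff.mp hL'
  set L := f xL with hLdef
  have hmem : ∀ ε : ℝ, 0 < ε → xε ε ∈ Ω := fun ε h => (hxε ε h).1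
  have key1 : ∀ ε : ℝ, 0 < ε → f (xε ε) ≤ f xstar := by
    intro ε hε
    have h1 := (hxε ε hε).2.1 xstar hxSmem.1
    have h2 := hxSmem.2 (xε ε) (hmem ε hε)
    have : ε * f (xε ε) ≤ ε * f xstar := by linarith
    exact le_of_mul_le_mul_left this hε
  have key2 : ∀ ε : ℝ, 0 < ε → c ⬝ᵥ xε ε ≤ c ⬝ᵥ xstar + ε * (f xstar - L) := by
    intro ε hε
    have h1 := (hxε ε hε).2.1 xstar hxSmem.1
    have h2 := hL (xε ε) (hmem ε hε)
    nlinarith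
  apply tendsto_of_subseq_tendsto
  intro ns hns
  obtain ⟨x0, hx0Ω, φ, hφ, hconv⟩ :=
    hcpt.tendsto_subseq (x := fun k => xε (εk (ns k))) (fun k => hmem _ (hpos _))
  refine ⟨φ, ?_⟩
  have hψ : Tendsto (fun k => εk (ns (φ k))) atTop (𝓝 0) :=
    htend0.comp (hns.comp hφ.tendsto_atTop)
  have h1 : Tendsto (fun k => c ⬝ᵥ xε (εk (ns (φ k)))) atTop (𝓝 (c ⬝ᵥ x0)) :=
    (hcc.tendsto x0).comp hconv
  have h2 : Tendsto (fun k => c ⬝ᵥ xstar + εk (ns (φ k)) * (f xstar - L)) atTop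
      (𝓝 (c ⬝ᵥ xstar)) := by
    have h0 : Tendsto (fun _ : ℕ => c ⬝ᵥ xstar) atTop (𝓝 (c ⬝ᵥ xstar)) :=
      tendsto_const_nhds
    simpa using h0.add (hψ.mul_const (f xstar - L))
  have hcle : c ⬝ᵥ x0 ≤ c ⬝ᵥ xstar :=
    le_of_tendsto_of_tendsto' h1 h2 (fun k => key2 _ (hpos _))
  have hfle : f x0 ≤ f xstar :=
    le_of_tendsto_of_tendsto' ((hfc.tendsto x0).comp hconv) tendsto_const_nhds
      (fun k => key1 _ (hpos _))
  have hx0S : x0 ∈ S := by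
    rw [hS]
    exact ⟨hx0Ω, fun y hy => hcle.trans (hxSmem.2 y hy)⟩
  have hx0eq : x0 = xstar := huniq x0 ⟨hx0S, fun z hz => hfle.trans (hxmin z hz)⟩
  rw [← hx0eq]
  exact hconv
end

section
/- Let M be an n×n real symmetric matrix and ε > 0. The function X ↦ Tr(M·X) + ε·Tr(X·ln(X)), defined on the set of n×n real symmetric positive definite matrices, attains its infimum at the unique minimizer X* = exp(−M/ε − I) (matrix exponential), which is positive definite, and the minimum value is −ε·Tr(exp(−M/ε − I)). -/
open Matrix Real
open scoped Classical

/-- The von Neumann entropy `g(X) = ∑ᵢ σᵢ(X) ln σᵢ(X)` of a real symmetric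
(Hermitian) matrix; for positive definite `X` it equals `Tr(X·ln X)` with the
matrix logarithm defined through the spectral decomposition. -/
noncomputable def vnEntropy {n : ℕ} (X : Matrix (Fin n) (Fin n) ℝ) : ℝ :=
  if h : X.IsHermitian then ∑ i, h.eigenvalues i * Real.log (h.eigenvalues i) else 0

namespace TPEAux

open Polynomial

variable {n : ℕ}

lemma klein_key {a b : ℝ} (ha : 0 < a) (hb : 0 < b) :
    a * Real.log a - a * Real.log b - a + b
      = a * (Real.exp (Real.log b - Real.log a) - (Real.log b - Real.log a) - 1) := by
  have h1 : Real.exp (Real.log b - Real.log a) = b / a := by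
    rw [Real.exp_sub, Real.exp_log hb, Real.exp_log ha]
  rw [h1]
  field_simp
  ring

lemma klein_nonneg {a b : ℝ} (ha : 0 < a) (hb : 0 < b) :
    0 ≤ a * Real.log a - a * Real.log b - a + b := by
  rw [klein_key ha hb]
  have := Real.add_one_le_exp (Real.log b - Real.log a)
  nlinarith

lemma klein_pos {a b : ℝ} (ha : 0 < a) (hb : 0 < b) (hab : a ≠ b) :
    0 < a * Real.log a - a * Real.log b - a + b := by
  rw [klein_key ha hb]
  have hne : Real.log b - Real.log a ≠ 0 := by
    intro h
    have hlog : Real.log a = Real.log b := by linarith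
    exact hab (by rw [← Real.exp_log ha, ← Real.exp_log hb, hlog])
  have := Real.add_one_lt_exp hne
  nlinarith

lemma posDef_conj {U D : Matrix (Fin n) (Fin n) ℝ} (hU1 : U * star U = 1)
    (hD : D.PosDef) : (U * D * star U).PosDef := by
  rw [Matrix.posDef_iff_dotProduct_mulVec]; constructor
  · have h : (U * D * star U)ᴴ = U * Dᴴ * star U := by
      simp [Matrix.star_eq_conjTranspose, Matrix.conjTranspose_mul, Matrix.mul_assoc]
    rw [Matrix.IsHermitian, h, hD.1.eq]
  · intro x hx
    have hy : U *ᵥ (star U *ᵥ x) = x := by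
      rw [Matrix.mulVec_mulVec, hU1, Matrix.one_mulVec]
    have hyne : star U *ᵥ x ≠ 0 := by
      intro h
      apply hx
      rw [← hy, h, Matrix.mulVec_zero]
    have key : dotProduct (star x) ((U * D * star U) *ᵥ x)
        = dotProduct (star (star U *ᵥ x)) (D *ᵥ (star U *ᵥ x)) := by
      rw [← Matrix.mulVec_mulVec, ← Matrix.mulVec_mulVec, Matrix.dotProduct_mulVec (star x) U,
        Matrix.star_mulVec]
      simp [Matrix.star_eq_conjTranspose]
    rw [key]
    exact hD.dotProduct_mulVec_pos hyne

lemma trace_diag_mul (a : Fin n → ℝ) (B : Matrix (Fin n) (Fin n) ℝ) :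
    (diagonal a * B).trace = ∑ i, a i * B i i := by
  simp [Matrix.trace, Matrix.diag, Matrix.diagonal_mul]

lemma trace_conj_mul_conj (U V : Matrix (Fin n) (Fin n) ℝ) (a b : Fin n → ℝ) :
    ((U * diagonal a * star U) * (V * diagonal b * star V)).trace
      = ∑ i, ∑ j, a i * b j * ((star U * V) i j) ^ 2 := by
  have h1 : (U * diagonal a * star U) * (V * diagonal b * star V)
      = (U * diagonal a) * (star U * (V * diagonal b * star V)) := by
    simp only [Matrix.mul_assoc]
  have h2 : (star U * (V * diagonal b * star V)) * (U * diagonal a)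
      = ((star U * (V * diagonal b * star V)) * U) * diagonal a := by
    simp only [Matrix.mul_assoc]
  have h3 : (star U * (V * diagonal b * star V)) * U
      = (star U * V) * diagonal b * star (star U * V) := by
    rw [Matrix.star_mul, star_star]
    simp only [Matrix.mul_assoc]
  rw [h1, Matrix.trace_mul_comm, h2, h3, Matrix.trace_mul_comm, trace_diag_mul]
  refine Finset.sum_congr rfl fun i _ => ?_
  have h4 : (star U * V * diagonal b * star (star U * V)) i i
      = ∑ j, (star U * V) i j * b j * (star U * V) i j := by
    rw [Matrix.mul_apply]
    refine Finset.sum_congr rfl fun j _ => ?_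
    rw [Matrix.mul_diagonal, Matrix.star_apply, star_trivial ((star U * V) i j)]
  rw [h4, Finset.mul_sum]
  refine Finset.sum_congr rfl fun j _ => by ring

lemma row_sum_sq {W : Matrix (Fin n) (Fin n) ℝ} (hW1 : W * star W = 1) (i : Fin n) :
    ∑ j, (W i j) ^ 2 = 1 := by
  have h : (W * star W) i i = (1 : Matrix (Fin n) (Fin n) ℝ) i i := by rw [hW1]
  rw [Matrix.mul_apply, Matrix.one_apply_eq] at h
  rw [← h]
  refine Finset.sum_congr rfl fun j _ => ?_
  rw [Matrix.star_apply, star_trivial (W i j), sq]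

lemma col_sum_sq {W : Matrix (Fin n) (Fin n) ℝ} (hW2 : star W * W = 1) (j : Fin n) :
    ∑ i, (W i j) ^ 2 = 1 := by
  have h : (star W * W) j j = (1 : Matrix (Fin n) (Fin n) ℝ) j j := by rw [hW2]
  rw [Matrix.mul_apply, Matrix.one_apply_eq] at h
  rw [← h]
  refine Finset.sum_congr rfl fun i _ => ?_
  rw [Matrix.star_apply, star_trivial (W i j), sq]

lemma charpoly_diag (v : Fin n → ℝ) :
    (diagonal v).charpoly = ∏ i, (X - C (v i)) := by
  have h : charmatrix (diagonal v) = diagonal (fun i => (X : ℝ[X]) - C (v i)) := by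
    ext i j
    by_cases h : i = j
    · subst h; simp
    · simp [Matrix.charmatrix_apply_ne _ _ _ h, Matrix.diagonal_apply_ne _ h]
  rw [Matrix.charpoly, h, Matrix.det_diagonal]

lemma charpoly_conj {U : Matrix (Fin n) (Fin n) ℝ} (A : Matrix (Fin n) (Fin n) ℝ)
    (hU1 : U * star U = 1) :
    (U * A * star U).charpoly = A.charpoly := by
  set f : Matrix (Fin n) (Fin n) ℝ →+* Matrix (Fin n) (Fin n) ℝ[X] :=
    (C : ℝ →+* ℝ[X]).mapMatrix with hf
  have hone : f U * f (star U) = 1 := by rw [← _root_.map_mul, hU1, _root_.map_one]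
  have hcm : charmatrix (U * A * star U) = f U * charmatrix A * f (star U) := by
    rw [charmatrix, charmatrix, Matrix.mul_sub, Matrix.sub_mul]
    congr 1
    · have hsc : Commute (Matrix.scalar (Fin n) (X : ℝ[X])) (f U) :=
        Matrix.scalar_commute _ (fun r' => Commute.all _ _) _
      rw [← hsc.eq, Matrix.mul_assoc, ← _root_.map_mul, hU1, _root_.map_one, Matrix.mul_one]
    · rw [← _root_.map_mul, ← _root_.map_mul]
  rw [Matrix.charpoly, Matrix.charpoly, hcm, Matrix.det_mul, Matrix.det_mul]
  have hd : (f U).det * (f (star U)).det = 1 := by rw [← Matrix.det_mul, hone, Matrix.det_one]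
  calc (f U).det * (charmatrix A).det * (f (star U)).det
      = (charmatrix A).det * ((f U).det * (f (star U)).det) := by ring
    _ = (charmatrix A).det := by rw [hd, mul_one]

lemma roots_prod (g : Fin n → ℝ) :
    (∏ i, ((X : ℝ[X]) - C (g i))).roots = Finset.univ.val.map g := by
  have h : (∏ i, ((X : ℝ[X]) - C (g i)))
      = ((Finset.univ.val.map g).map (fun a => (X : ℝ[X]) - C a)).prod := by
    rw [Multiset.map_map]; rfl
  rw [h, Polynomial.roots_multiset_prod_X_sub_C]

lemma spectral_real {A : Matrix (Fin n) (Fin n) ℝ} (hA : A.IsHermitian) :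
    A = (hA.eigenvectorUnitary : Matrix (Fin n) (Fin n) ℝ) * diagonal hA.eigenvalues *
      star (hA.eigenvectorUnitary : Matrix (Fin n) (Fin n) ℝ) := by
  have h := hA.spectral_theorem
  rwa [show (RCLike.ofReal ∘ hA.eigenvalues : Fin n → ℝ) = hA.eigenvalues by
    funext i; simp [RCLike.ofReal_real_eq_id]] at h

lemma sum_f_eigenvalues {A : Matrix (Fin n) (Fin n) ℝ} (hA : A.IsHermitian)
    {U : Matrix (Fin n) (Fin n) ℝ} (hU1 : U * star U = 1) {μ : Fin n → ℝ}
    (hdec : A = U * diagonal μ * star U) (f : ℝ → ℝ) :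
    ∑ i, f (hA.eigenvalues i) = ∑ i, f (μ i) := by
  have hU0 : (hA.eigenvectorUnitary : Matrix (Fin n) (Fin n) ℝ) *
      star (hA.eigenvectorUnitary : Matrix (Fin n) (Fin n) ℝ) = 1 :=
    Matrix.mem_unitaryGroup_iff.mp (hA.eigenvectorUnitary).2
  have h1 : A.charpoly = ∏ i, ((X : ℝ[X]) - C (hA.eigenvalues i)) := by
    conv_lhs => rw [spectral_real hA]
    rw [charpoly_conj _ hU0, charpoly_diag]
  have h2 : A.charpoly = ∏ i, ((X : ℝ[X]) - C (μ i)) := by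
    conv_lhs => rw [hdec]
    rw [charpoly_conj _ hU1, charpoly_diag]
  have hms : Finset.univ.val.map hA.eigenvalues = Finset.univ.val.map μ := by
    rw [← roots_prod hA.eigenvalues, ← roots_prod μ, ← h1, ← h2]
  calc ∑ i, f (hA.eigenvalues i) = ((Finset.univ.val.map hA.eigenvalues).map f).sum := by
        rw [Multiset.map_map]; rfl
    _ = ((Finset.univ.val.map μ).map f).sum := by rw [hms]
    _ = ∑ i, f (μ i) := by rw [Multiset.map_map]; rfl

end TPEAux

open TPEAux

/-- For a real symmetric `M` and `ε > 0`, the function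
`X ↦ Tr(M·X) + ε·Tr(X·ln X)` on symmetric positive definite matrices attains its
infimum at the unique minimizer `X* = exp(−M/ε − I)` (matrix exponential), which
is positive definite, and the minimum value is `−ε·Tr(exp(−M/ε − I))`. -/
theorem trace_plus_entropy_min {n : ℕ}
    (M : Matrix (Fin n) (Fin n) ℝ) (hM : M.IsHermitian) (ε : ℝ) (hε : 0 < ε)
    (φ : Matrix (Fin n) (Fin n) ℝ → ℝ)
    (hφ : ∀ X, φ X = (M * X).trace + ε * vnEntropy X)
    (Xstar : Matrix (Fin n) (Fin n) ℝ)
    (hXstar : Xstar = NormedSpace.exp (-(ε⁻¹ • M) - 1)) :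
    Xstar.PosDef ∧
    (∀ X : Matrix (Fin n) (Fin n) ℝ, X.PosDef → φ Xstar ≤ φ X) ∧
    (∀ X : Matrix (Fin n) (Fin n) ℝ, X.PosDef → φ X = φ Xstar → X = Xstar) ∧
    φ Xstar = -ε * Xstar.trace := by
  classical
  set U : Matrix (Fin n) (Fin n) ℝ := (hM.eigenvectorUnitary : Matrix (Fin n) (Fin n) ℝ)
    with hUdef
  have hU1 : U * star U = 1 := Matrix.mem_unitaryGroup_iff.mp (hM.eigenvectorUnitary).2
  have hU2 : star U * U = 1 := Matrix.mem_unitaryGroup_iff'.mp (hM.eigenvectorUnitary).2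
  set d : Fin n → ℝ := hM.eigenvalues with hddef
  have hMspec : M = U * diagonal d * star U := spectral_real hM
  set l : Fin n → ℝ := fun i => -(ε⁻¹ * d i) - 1 with hldef
  have hd : ∀ i, d i = -ε * l i - ε := by
    intro i
    simp only [hldef]
    field_simp
    ring
  have hLdec : -(ε⁻¹ • M) - 1 = U * diagonal l * star U := by
    have hdiag : diagonal l = -(ε⁻¹ • diagonal d) - 1 := by
      ext i j
      by_cases h : i = j
      · subst h; simp [hldef]
      · simp [Matrix.diagonal_apply_ne _ h, Matrix.one_apply_ne h]
    rw [hdiag, hMspec]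
    simp only [mul_sub, sub_mul, mul_one, mul_neg, neg_mul, mul_smul_comm, smul_mul_assoc, hU1]
  have hUunit : IsUnit U :=
    (Matrix.isUnit_iff_isUnit_det U).mpr
      (IsUnit.of_mul_eq_one _ (by rw [← Matrix.det_mul, hU1, Matrix.det_one]))
  have hUinv : U⁻¹ = star U := Matrix.inv_eq_right_inv hU1
  have hXdec : Xstar = U * diagonal (fun i => Real.exp (l i)) * star U := by
    have hexp : (NormedSpace.exp l : Fin n → ℝ) = fun i => Real.exp (l i) :=
      funext fun i => by rw [Pi.coe_exp, Real.exp_eq_exp_ℝ]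
    rw [hXstar, hLdec, ← hUinv, Matrix.exp_conj U (diagonal l) hUunit, Matrix.exp_diagonal,
      hexp, hUinv]
  have hXpos : Xstar.PosDef := by
    rw [hXdec]
    exact posDef_conj hU1 (Matrix.PosDef.diagonal fun i => Real.exp_pos _)
  have htrXstar : Xstar.trace = ∑ i, Real.exp (l i) := by
    rw [hXdec, Matrix.trace_mul_cycle, hU2, Matrix.one_mul, Matrix.trace_diagonal]
  have hvnXstar : vnEntropy Xstar = ∑ i, Real.exp (l i) * l i := by
    have hXh : Xstar.IsHermitian := hXpos.1
    rw [vnEntropy, dif_pos hXh]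
    rw [sum_f_eigenvalues hXh hU1 hXdec (fun t => t * Real.log t)]
    exact Finset.sum_congr rfl fun i _ => by rw [Real.log_exp]
  have hφXstar : φ Xstar = -ε * Xstar.trace := by
    have htrM : (M * Xstar).trace = ∑ i, d i * Real.exp (l i) := by
      rw [hMspec, hXdec]
      have e1 : U * diagonal d * star U * (U * diagonal (fun i => Real.exp (l i)) * star U)
          = U * diagonal d * (star U * U) * diagonal (fun i => Real.exp (l i)) * star U := by
        simp only [Matrix.mul_assoc]
      rw [e1, hU2, Matrix.mul_one, Matrix.mul_assoc U, Matrix.diagonal_mul_diagonal,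
        Matrix.trace_mul_cycle, hU2, Matrix.one_mul, Matrix.trace_diagonal]
    rw [hφ, hvnXstar, htrM, htrXstar, Finset.mul_sum, Finset.mul_sum, ← Finset.sum_add_distrib]
    refine Finset.sum_congr rfl fun i _ => ?_
    rw [hd i]
    ring
  have main : ∀ X : Matrix (Fin n) (Fin n) ℝ, X.PosDef →
      φ Xstar ≤ φ X ∧ (φ X = φ Xstar → X = Xstar) := by
    intro X hX
    have hXh : X.IsHermitian := hX.1
    set V : Matrix (Fin n) (Fin n) ℝ := (hXh.eigenvectorUnitary : Matrix (Fin n) (Fin n) ℝ)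
      with hVdef
    have hV1 : V * star V = 1 := Matrix.mem_unitaryGroup_iff.mp (hXh.eigenvectorUnitary).2
    have hV2 : star V * V = 1 := Matrix.mem_unitaryGroup_iff'.mp (hXh.eigenvectorUnitary).2
    set μ : Fin n → ℝ := hXh.eigenvalues with hμdef
    have hμpos : ∀ i, 0 < μ i := fun i => hX.eigenvalues_pos i
    have hXdec' : X = V * diagonal μ * star V := spectral_real hXh
    have hW1 : (star U * V) * star (star U * V) = 1 := by
      rw [Matrix.star_mul, star_star]
      calc star U * V * (star V * U) = star U * (V * star V) * U := by
            simp only [Matrix.mul_assoc]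
        _ = 1 := by rw [hV1, Matrix.mul_one, hU2]
    have hW2 : star (star U * V) * (star U * V) = 1 := by
      rw [Matrix.star_mul, star_star]
      calc star V * U * (star U * V) = star V * (U * star U) * V := by
            simp only [Matrix.mul_assoc]
        _ = 1 := by rw [hU1, Matrix.mul_one, hV2]
    have hrow : ∀ i, ∑ j, ((star U * V) i j) ^ 2 = 1 := row_sum_sq hW1
    have hcol : ∀ j, ∑ i, ((star U * V) i j) ^ 2 = 1 := col_sum_sq hW2
    have hMX : (M * X).trace = ∑ i, ∑ j, d i * μ j * ((star U * V) i j) ^ 2 := by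
      rw [hMspec, hXdec']
      exact trace_conj_mul_conj U V d μ
    have hvn : vnEntropy X = ∑ j, μ j * Real.log (μ j) := by rw [vnEntropy, dif_pos hXh]
    set S : ℝ := ∑ i, ∑ j, ((star U * V) i j) ^ 2 *
      (μ j * Real.log (μ j) - μ j * l i - μ j + Real.exp (l i)) with hSdef
    have e1 : ∑ j, μ j * Real.log (μ j)
        = ∑ i, ∑ j, ((star U * V) i j) ^ 2 * (μ j * Real.log (μ j)) := by
      rw [Finset.sum_comm]
      refine Finset.sum_congr rfl fun j _ => Eq.symm ?_
      rw [← Finset.sum_mul, hcol j, one_mul]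
    have e2 : ∑ i, Real.exp (l i)
        = ∑ i, ∑ j, ((star U * V) i j) ^ 2 * Real.exp (l i) := by
      refine Finset.sum_congr rfl fun i _ => Eq.symm ?_
      rw [← Finset.sum_mul, hrow i, one_mul]
    have hφX : φ X = ε * S - ε * Xstar.trace := by
      rw [hφ, hMX, hvn, e1, htrXstar, e2, hSdef]
      rw [Finset.mul_sum, Finset.mul_sum, Finset.mul_sum, ← Finset.sum_add_distrib,
        ← Finset.sum_sub_distrib]
      refine Finset.sum_congr rfl fun i _ => ?_
      rw [Finset.mul_sum, Finset.mul_sum, Finset.mul_sum, ← Finset.sum_add_distrib,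
        ← Finset.sum_sub_distrib]
      refine Finset.sum_congr rfl fun j _ => ?_
      rw [hd i]
      ring
    have hterm : ∀ i j, 0 ≤ ((star U * V) i j) ^ 2 *
        (μ j * Real.log (μ j) - μ j * l i - μ j + Real.exp (l i)) := by
      intro i j
      refine mul_nonneg (sq_nonneg _) ?_
      have h := klein_nonneg (hμpos j) (Real.exp_pos (l i))
      rwa [Real.log_exp] at h
    have hS : 0 ≤ S := by
      rw [hSdef]
      exact Finset.sum_nonneg fun i _ => Finset.sum_nonneg fun j _ => hterm i j
    constructor
    · rw [hφXstar, hφX]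
      nlinarith [mul_nonneg hε.le hS]
    · intro heq
      have hS0 : S = 0 := by
        rw [hφX, hφXstar] at heq
        have hεS : ε * S = 0 := by linarith
        rcases mul_eq_zero.mp hεS with h | h
        · exact absurd h hε.ne'
        · exact h
      rw [hSdef] at hS0
      have h0 : ∀ i ∈ Finset.univ, ∀ j ∈ (Finset.univ : Finset (Fin n)),
          ((star U * V) i j) ^ 2 *
            (μ j * Real.log (μ j) - μ j * l i - μ j + Real.exp (l i)) = 0 := by
        intro i hi
        have hrow0 := (Finset.sum_eq_zero_iff_of_nonneg
          (fun i _ => Finset.sum_nonneg fun j _ => hterm i j)).mp hS0 i hi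
        exact (Finset.sum_eq_zero_iff_of_nonneg (fun j _ => hterm i j)).mp hrow0
      have hWμ : ∀ i j, Real.exp (l i) * (star U * V) i j = (star U * V) i j * μ j := by
        intro i j
        by_cases hw : (star U * V) i j = 0
        · rw [hw]; ring
        · have h00 := h0 i (Finset.mem_univ i) j (Finset.mem_univ j)
          have hk : μ j * Real.log (μ j) - μ j * l i - μ j + Real.exp (l i) = 0 := by
            rcases mul_eq_zero.mp h00 with h | h
            · exact absurd h (pow_ne_zero 2 hw)
            · exact h
          have hμe : μ j = Real.exp (l i) := by
            by_contra hne
            have hp := klein_pos (hμpos j) (Real.exp_pos (l i)) hne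
            rw [Real.log_exp] at hp
            linarith
          rw [hμe]
          ring
      have hDW : diagonal (fun i => Real.exp (l i)) * (star U * V)
          = (star U * V) * diagonal μ := by
        ext i j
        rw [Matrix.diagonal_mul, Matrix.mul_diagonal]
        exact hWμ i j
      have hXV : Xstar * V = X * V := by
        calc Xstar * V
            = U * (diagonal (fun i => Real.exp (l i)) * (star U * V)) := by
              rw [hXdec]; simp only [Matrix.mul_assoc]
          _ = U * ((star U * V) * diagonal μ) := by rw [hDW]
          _ = (U * star U) * (V * diagonal μ) := by simp only [Matrix.mul_assoc]
          _ = V * diagonal μ := by rw [hU1, Matrix.one_mul]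
          _ = X * V := by
              rw [hXdec', Matrix.mul_assoc (V * diagonal μ) (star V) V, hV2, Matrix.mul_one]
      calc X = X * (V * star V) := by rw [hV1, Matrix.mul_one]
        _ = (X * V) * star V := by rw [Matrix.mul_assoc]
        _ = (Xstar * V) * star V := by rw [hXV]
        _ = Xstar * (V * star V) := by rw [Matrix.mul_assoc]
        _ = Xstar := by rw [hV1, Matrix.mul_one]
  exact ⟨hXpos, fun X hX => (main X hX).1, fun X hX => (main X hX).2, hφXstar⟩
end

section
/- Let 𝒜 : S^n → ℝ^m be a linear map with adjoint 𝒜* : ℝ^m → S^n, b ∈ ℝ^m, C ∈ S^n, and ε > 0. For every λ ∈ ℝ^m, the Lagrangian dual function Ĝ_ε(λ) := b·λ + inf{ Tr((C − 𝒜*λ)·X) + ε·Tr(X·ln(X)) : X symmetric positive definite } satisfies Ĝ_ε(λ) = b·λ − ε·Tr(X(λ)) with X(λ) = exp((𝒜*λ − C)/ε − I), the infimum being attained uniquely at X(λ); moreover, if 𝒜* is injective then Ĝ_ε is strictly concave on ℝ^m. -/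
open Matrix Real
open scoped Classical

namespace SDPAux

variable {n : ℕ}




/-- entrywise intertwining from equality of conjugated diagonals -/
lemma intertwine {U V : Matrix (Fin n) (Fin n) ℝ}
    (hV1 : star V * V = 1) (hU1 : star U * U = 1)
    {x d : Fin n → ℝ}
    (h : V * diagonal x * star V = U * diagonal d * star U) :
    ∀ i j, x i * (star V * U) i j = (star V * U) i j * d j := by
  have key : diagonal x * (star V * U) = (star V * U) * diagonal d := by
    calc diagonal x * (star V * U)
        = (star V * V) * diagonal x * (star V * U) := by rw [hV1, one_mul]
      _ = star V * (V * diagonal x * star V) * U := by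
          simp only [Matrix.mul_assoc]
      _ = star V * (U * diagonal d * star U) * U := by rw [h]
      _ = (star V * U) * diagonal d * (star U * U) := by simp only [Matrix.mul_assoc]
      _ = (star V * U) * diagonal d := by rw [hU1, Matrix.mul_one]
  intro i j
  have := congrFun (congrFun key i) j
  rwa [Matrix.diagonal_mul, Matrix.mul_diagonal] at this

/-- rebuild equality of conjugated diagonals from entrywise intertwining -/
lemma rebuild {U V : Matrix (Fin n) (Fin n) ℝ}
    (hV2 : V * star V = 1) (hU2 : U * star U = 1)
    {a b : Fin n → ℝ}
    (h : ∀ i j, a i * (star V * U) i j = (star V * U) i j * b j) :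
    V * diagonal a * star V = U * diagonal b * star U := by
  have key : diagonal a * (star V * U) = (star V * U) * diagonal b := by
    ext i j
    rw [Matrix.diagonal_mul, Matrix.mul_diagonal]
    exact h i j
  calc V * diagonal a * star V
      = V * diagonal a * (star V * U * star U) := by
        conv_rhs => rw [Matrix.mul_assoc (star V) U (star U), hU2, Matrix.mul_one]
    _ = V * (diagonal a * (star V * U)) * star U := by simp only [Matrix.mul_assoc]
    _ = V * ((star V * U) * diagonal b) * star U := by rw [key]
    _ = (V * star V) * (U * diagonal b * star U) := by simp only [Matrix.mul_assoc]
    _ = U * diagonal b * star U := by rw [hV2, one_mul]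

lemma row_sq_sum {W : Matrix (Fin n) (Fin n) ℝ} (h : W * star W = 1) (i : Fin n) :
    ∑ j, (W i j) ^ 2 = 1 := by
  have := congrFun (congrFun h i) i
  rw [Matrix.mul_apply] at this
  simp only [Matrix.one_apply_eq] at this
  rw [← this]
  apply Finset.sum_congr rfl
  intro j _
  rw [Matrix.star_apply, star_trivial, sq]

lemma col_sq_sum {W : Matrix (Fin n) (Fin n) ℝ} (h : star W * W = 1) (j : Fin n) :
    ∑ i, (W i j) ^ 2 = 1 := by
  have := congrFun (congrFun h j) j
  rw [Matrix.mul_apply] at this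
  simp only [Matrix.one_apply_eq] at this
  rw [← this]
  apply Finset.sum_congr rfl
  intro i _
  rw [Matrix.star_apply, star_trivial, sq, mul_comm]

/-- sum transfer across an intertwining unitary -/
lemma sum_transfer {W : Matrix (Fin n) (Fin n) ℝ}
    (h1 : W * star W = 1) (h2 : star W * W = 1)
    {x d : Fin n → ℝ} (hint : ∀ i j, x i * W i j = W i j * d j)
    (g : ℝ → ℝ) : ∑ i, g (x i) = ∑ j, g (d j) := by
  have key : ∀ i j, (W i j) ^ 2 * g (x i) = (W i j) ^ 2 * g (d j) := by
    intro i j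
    by_cases hw : W i j = 0
    · simp [hw]
    · have : x i = d j := by
        have := hint i j
        rw [mul_comm (W i j) (d j)] at this
        exact mul_right_cancel₀ hw this
      rw [this]
  calc ∑ i, g (x i) = ∑ i, (∑ j, (W i j) ^ 2) * g (x i) := by
        apply Finset.sum_congr rfl; intro i _; rw [row_sq_sum h1, one_mul]
    _ = ∑ i, ∑ j, (W i j) ^ 2 * g (x i) := by
        apply Finset.sum_congr rfl; intro i _; rw [Finset.sum_mul]
    _ = ∑ i, ∑ j, (W i j) ^ 2 * g (d j) := by
        apply Finset.sum_congr rfl; intro i _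
        apply Finset.sum_congr rfl; intro j _
        exact key i j
    _ = ∑ j, ∑ i, (W i j) ^ 2 * g (d j) := Finset.sum_comm
    _ = ∑ j, g (d j) := by
        apply Finset.sum_congr rfl; intro j _
        rw [← Finset.sum_mul, col_sq_sum h2, one_mul]





/-- real spectral theorem in convenient form -/
lemma spec {M : Matrix (Fin n) (Fin n) ℝ} (hM : M.IsHermitian) :
    M = (hM.eigenvectorUnitary : Matrix (Fin n) (Fin n) ℝ) * diagonal hM.eigenvalues *
      star (hM.eigenvectorUnitary : Matrix (Fin n) (Fin n) ℝ) := by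
  simpa using hM.spectral_theorem

lemma unit1 {M : Matrix (Fin n) (Fin n) ℝ} (hM : M.IsHermitian) :
    star (hM.eigenvectorUnitary : Matrix (Fin n) (Fin n) ℝ) *
      (hM.eigenvectorUnitary : Matrix (Fin n) (Fin n) ℝ) = 1 :=
  Matrix.mem_unitaryGroup_iff'.mp hM.eigenvectorUnitary.2

lemma unit2 {M : Matrix (Fin n) (Fin n) ℝ} (hM : M.IsHermitian) :
    (hM.eigenvectorUnitary : Matrix (Fin n) (Fin n) ℝ) *
      star (hM.eigenvectorUnitary : Matrix (Fin n) (Fin n) ℝ) = 1 :=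
  Matrix.mem_unitaryGroup_iff.mp hM.eigenvectorUnitary.2

/-- exp of a hermitian matrix via its eigendecomposition -/
lemma exp_spec {M : Matrix (Fin n) (Fin n) ℝ} (hM : M.IsHermitian) :
    NormedSpace.exp M = (hM.eigenvectorUnitary : Matrix (Fin n) (Fin n) ℝ) *
      diagonal (fun j => rexp (hM.eigenvalues j)) *
      star (hM.eigenvectorUnitary : Matrix (Fin n) (Fin n) ℝ) := by
  set V : Matrix (Fin n) (Fin n) ℝ := (hM.eigenvectorUnitary : Matrix (Fin n) (Fin n) ℝ)
  have hVinv : V⁻¹ = star V := Matrix.inv_eq_left_inv (unit1 hM)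
  have hunit : IsUnit V := ⟨⟨V, star V, unit2 hM, unit1 hM⟩, rfl⟩
  calc NormedSpace.exp M
      = NormedSpace.exp (V * diagonal hM.eigenvalues * V⁻¹) := by
        rw [hVinv, ← spec hM]
    _ = V * NormedSpace.exp (diagonal hM.eigenvalues) * V⁻¹ :=
        Matrix.exp_conj V (diagonal hM.eigenvalues) hunit
    _ = V * diagonal (fun j => rexp (hM.eigenvalues j)) * star V := by
        rw [Matrix.exp_diagonal, hVinv]
        congr 2
        rw [Pi.exp_def]
        funext j
        rw [Real.exp_eq_exp_ℝ]

/-- a conjugated real diagonal is hermitian -/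
lemma isHermitian_conj_diag {V : Matrix (Fin n) (Fin n) ℝ} (d : Fin n → ℝ) :
    (V * diagonal d * star V).IsHermitian := by
  have hd : (diagonal d)ᴴ = diagonal d := by
    simp [Matrix.diagonal_conjTranspose]
  unfold Matrix.IsHermitian
  simp only [Matrix.star_eq_conjTranspose, Matrix.conjTranspose_mul,
    Matrix.conjTranspose_conjTranspose, hd, Matrix.mul_assoc]

lemma exp_isHermitian {M : Matrix (Fin n) (Fin n) ℝ} (hM : M.IsHermitian) :
    (NormedSpace.exp M).IsHermitian := by
  rw [exp_spec hM]; exact isHermitian_conj_diag _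

/-- trace of conjugated diagonal -/
lemma trace_conj_diag {V : Matrix (Fin n) (Fin n) ℝ} (hV : star V * V = 1) (d : Fin n → ℝ) :
    (V * diagonal d * star V).trace = ∑ i, d i := by
  rw [Matrix.trace_mul_cycle, hV, one_mul, Matrix.trace_diagonal]

/-- conjugated positive diagonal is positive definite -/
lemma posDef_conj_diag {V : Matrix (Fin n) (Fin n) ℝ}
    (hV1 : star V * V = 1) (hV2 : V * star V = 1)
    {d : Fin n → ℝ} (hd : ∀ i, 0 < d i) :
    (V * diagonal d * star V).PosDef := by
  refine Matrix.PosDef.of_dotProduct_mulVec_pos (isHermitian_conj_diag d) (fun x hx => ?_)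
  have hy : star V *ᵥ x ≠ 0 := by
    intro h0
    apply hx
    have : V *ᵥ (star V *ᵥ x) = V *ᵥ 0 := by rw [h0]
    rwa [Matrix.mulVec_mulVec, hV2, Matrix.one_mulVec, Matrix.mulVec_zero] at this
  set y := star V *ᵥ x with hy_def
  have hrw : dotProduct (star x) ((V * diagonal d * star V) *ᵥ x) = ∑ i, d i * (y i) ^ 2 := by
    rw [← Matrix.mulVec_mulVec, ← Matrix.mulVec_mulVec]
    rw [Matrix.dotProduct_mulVec (star x) V]
    have hxV : star x ᵥ* V = star y := by
      rw [hy_def, Matrix.star_mulVec, Matrix.star_eq_conjTranspose,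
        Matrix.conjTranspose_conjTranspose]
    rw [hxV]
    simp only [Pi.star_apply, star_trivial, dotProduct, Matrix.mulVec_diagonal]
    apply Finset.sum_congr rfl
    intro i _
    ring
  rw [hrw]
  obtain ⟨i0, hi0⟩ := Function.ne_iff.mp hy
  simp only [Pi.zero_apply] at hi0
  have hsq : 0 < y i0 ^ 2 := by
    rcases lt_or_gt_of_ne hi0 with h | h
    · nlinarith
    · nlinarith
  apply Finset.sum_pos' (fun i _ => mul_nonneg (hd i).le (sq_nonneg _))
  exact ⟨i0, Finset.mem_univ _, mul_pos (hd i0) hsq⟩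





/-- trace of product of two hermitian matrices via eigen data -/
lemma trace_mul_eig {S X : Matrix (Fin n) (Fin n) ℝ}
    (hS : S.IsHermitian) (hX : X.IsHermitian) :
    (S * X).trace = ∑ i, ∑ j, (((star (hX.eigenvectorUnitary : Matrix (Fin n) (Fin n) ℝ) *
        (hS.eigenvectorUnitary : Matrix (Fin n) (Fin n) ℝ)) i j) ^ 2) *
        (hX.eigenvalues i * hS.eigenvalues j) := by
  set U : Matrix (Fin n) (Fin n) ℝ := (hS.eigenvectorUnitary : Matrix (Fin n) (Fin n) ℝ) with hU
  set V : Matrix (Fin n) (Fin n) ℝ := (hX.eigenvectorUnitary : Matrix (Fin n) (Fin n) ℝ) with hV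
  set s := hS.eigenvalues
  set x := hX.eigenvalues
  set W : Matrix (Fin n) (Fin n) ℝ := star V * U with hW
  have hSd : S = U * diagonal s * star U := by
    simpa using hS.spectral_theorem
  have hXd : X = V * diagonal x * star V := by
    simpa using hX.spectral_theorem
  have hsW : star W = star U * V := by
    rw [hW, Matrix.star_mul, star_star]
  have key : S * X = U * (diagonal s * star W * diagonal x) * star V := by
    rw [hSd, hXd, hsW]
    simp only [Matrix.mul_assoc]
  rw [key, Matrix.trace_mul_cycle, ← Matrix.mul_assoc, ← hW, Matrix.trace_mul_comm]
  rw [Matrix.trace]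
  have diagform : ∀ i, (diagonal x * (W * (diagonal s * star W))).diag i
      = ∑ j, (W i j) ^ 2 * (x i * s j) := by
    intro i
    rw [Matrix.diag_apply, Matrix.diagonal_mul, Matrix.mul_apply, Finset.mul_sum]
    apply Finset.sum_congr rfl
    intro j _
    rw [Matrix.diagonal_mul, Matrix.star_apply, star_trivial]
    ring
  apply Finset.sum_congr rfl
  intro i _
  exact diagform i


lemma prod_unit1 {U V : Matrix (Fin n) (Fin n) ℝ}
    (hU2 : U * star U = 1) (hV1 : star V * V = 1) :
    (star V * U) * star (star V * U) = 1 := by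
  rw [Matrix.star_mul, star_star]
  calc star V * U * (star U * V) = star V * (U * star U) * V := by simp only [Matrix.mul_assoc]
    _ = star V * V := by rw [hU2, Matrix.mul_one]
    _ = 1 := hV1

lemma prod_unit2 {U V : Matrix (Fin n) (Fin n) ℝ}
    (hU1 : star U * U = 1) (hV2 : V * star V = 1) :
    star (star V * U) * (star V * U) = 1 := by
  rw [Matrix.star_mul, star_star]
  calc star U * V * (star V * U) = star U * (V * star V) * U := by simp only [Matrix.mul_assoc]
    _ = star U * U := by rw [hV2, Matrix.mul_one]
    _ = 1 := hU1

lemma scalar_gibbs {x t : ℝ} (hx : 0 < x) :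
    x * t + x - x * Real.log x ≤ rexp t := by
  have h : (t - Real.log x) + 1 ≤ rexp (t - Real.log x) := by
    have := Real.add_one_le_exp (t - Real.log x)
    linarith
  have he : rexp t = x * rexp (t - Real.log x) := by
    rw [Real.exp_sub, Real.exp_log hx]
    field_simp
  have h2 := mul_le_mul_of_nonneg_left h hx.le
  rw [he]
  nlinarith [h2]

lemma scalar_gibbs_eq {x t : ℝ} (hx : 0 < x)
    (h : x * t + x - x * Real.log x = rexp t) : x = rexp t := by
  by_contra hne
  have ht : t - Real.log x ≠ 0 := by
    intro h0
    apply hne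
    have hte : t = Real.log x := by linarith
    rw [hte, Real.exp_log hx]
  have h1 : (t - Real.log x) + 1 < rexp (t - Real.log x) := by
    have := Real.add_one_lt_exp ht
    linarith
  have he : rexp t = x * rexp (t - Real.log x) := by
    rw [Real.exp_sub, Real.exp_log hx]
    field_simp
  have h2 := (mul_lt_mul_iff_right₀ hx).mpr h1
  rw [he] at h
  nlinarith [h2]

/-- transfer of spectral sums for `exp` of a hermitian matrix -/
lemma sum_g_eig_exp {S : Matrix (Fin n) (Fin n) ℝ} (hS : S.IsHermitian) (g : ℝ → ℝ) :
    ∑ i, g ((exp_isHermitian hS).eigenvalues i) = ∑ j, g (rexp (hS.eigenvalues j)) := by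
  have hE := exp_isHermitian hS
  have hdec : (hE.eigenvectorUnitary : Matrix (Fin n) (Fin n) ℝ) * diagonal hE.eigenvalues *
      star (hE.eigenvectorUnitary : Matrix (Fin n) (Fin n) ℝ)
      = (hS.eigenvectorUnitary : Matrix (Fin n) (Fin n) ℝ) *
        diagonal (fun j => rexp (hS.eigenvalues j)) *
        star (hS.eigenvectorUnitary : Matrix (Fin n) (Fin n) ℝ) := by
    rw [← spec hE, exp_spec hS]
  have hint := intertwine (unit1 hE) (unit1 hS) hdec
  exact sum_transfer (prod_unit1 (unit2 hS) (unit1 hE)) (prod_unit2 (unit1 hS) (unit2 hE)) hint g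

lemma trace_exp {S : Matrix (Fin n) (Fin n) ℝ} (hS : S.IsHermitian) :
    (NormedSpace.exp S).trace = ∑ j, rexp (hS.eigenvalues j) := by
  rw [exp_spec hS, trace_conj_diag (unit1 hS)]

lemma vnEntropy_exp {S : Matrix (Fin n) (Fin n) ℝ} (hS : S.IsHermitian) :
    vnEntropy (NormedSpace.exp S) = ∑ j, rexp (hS.eigenvalues j) * hS.eigenvalues j := by
  rw [vnEntropy, dif_pos (exp_isHermitian hS)]
  have := sum_g_eig_exp hS (fun t => t * Real.log t)
  rw [this]
  apply Finset.sum_congr rfl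
  intro j _
  rw [Real.log_exp]

lemma trace_mul_exp {S : Matrix (Fin n) (Fin n) ℝ} (hS : S.IsHermitian) :
    (S * NormedSpace.exp S).trace = ∑ j, hS.eigenvalues j * rexp (hS.eigenvalues j) := by
  set U : Matrix (Fin n) (Fin n) ℝ := (hS.eigenvectorUnitary : Matrix (Fin n) (Fin n) ℝ)
  have key : S * NormedSpace.exp S
      = U * diagonal (fun j => hS.eigenvalues j * rexp (hS.eigenvalues j)) * star U := by
    have h1 : S * NormedSpace.exp S =
        (U * diagonal hS.eigenvalues * star U) *
          (U * diagonal (fun j => rexp (hS.eigenvalues j)) * star U) := by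
      rw [← spec hS, ← exp_spec hS]
    rw [h1]
    calc (U * diagonal hS.eigenvalues * star U) *
          (U * diagonal (fun j => rexp (hS.eigenvalues j)) * star U)
        = U * (diagonal hS.eigenvalues * ((star U * U) *
            (diagonal (fun j => rexp (hS.eigenvalues j)) * star U))) := by
          simp only [Matrix.mul_assoc]
      _ = U * (diagonal hS.eigenvalues * (diagonal (fun j => rexp (hS.eigenvalues j)) * star U)) := by
          rw [unit1 hS, Matrix.one_mul]
      _ = U * (diagonal hS.eigenvalues * diagonal (fun j => rexp (hS.eigenvalues j))) * star U := by
          simp only [Matrix.mul_assoc]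
      _ = U * diagonal (fun j => hS.eigenvalues j * rexp (hS.eigenvalues j)) * star U := by
          rw [Matrix.diagonal_mul_diagonal]
  rw [key, trace_conj_diag (unit1 hS)]

lemma gibbs_attained {S : Matrix (Fin n) (Fin n) ℝ} (hS : S.IsHermitian) :
    (S * NormedSpace.exp S).trace + (NormedSpace.exp S).trace
      - vnEntropy (NormedSpace.exp S) = (NormedSpace.exp S).trace := by
  rw [trace_mul_exp hS, vnEntropy_exp hS]
  have : ∑ j, hS.eigenvalues j * rexp (hS.eigenvalues j)
      = ∑ j, rexp (hS.eigenvalues j) * hS.eigenvalues j := by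
    apply Finset.sum_congr rfl
    intro j _
    ring
  rw [this]
  ring

/-- injectivity of exp on hermitian matrices -/
lemma exp_inj {A B : Matrix (Fin n) (Fin n) ℝ} (hA : A.IsHermitian) (hB : B.IsHermitian)
    (h : NormedSpace.exp A = NormedSpace.exp B) : A = B := by
  have hdec : (hA.eigenvectorUnitary : Matrix (Fin n) (Fin n) ℝ) *
      diagonal (fun i => rexp (hA.eigenvalues i)) *
      star (hA.eigenvectorUnitary : Matrix (Fin n) (Fin n) ℝ)
      = (hB.eigenvectorUnitary : Matrix (Fin n) (Fin n) ℝ) *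
        diagonal (fun j => rexp (hB.eigenvalues j)) *
        star (hB.eigenvectorUnitary : Matrix (Fin n) (Fin n) ℝ) := by
    rw [← exp_spec hA, ← exp_spec hB, h]
  have hint := intertwine (unit1 hA) (unit1 hB) hdec
  have hint2 : ∀ i j, hA.eigenvalues i *
      ((star (hA.eigenvectorUnitary : Matrix (Fin n) (Fin n) ℝ) *
        (hB.eigenvectorUnitary : Matrix (Fin n) (Fin n) ℝ)) i j)
      = ((star (hA.eigenvectorUnitary : Matrix (Fin n) (Fin n) ℝ) *
        (hB.eigenvectorUnitary : Matrix (Fin n) (Fin n) ℝ)) i j) * hB.eigenvalues j := by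
    intro i j
    by_cases hw : (star (hA.eigenvectorUnitary : Matrix (Fin n) (Fin n) ℝ) *
        (hB.eigenvectorUnitary : Matrix (Fin n) (Fin n) ℝ)) i j = 0
    · rw [hw, mul_zero, zero_mul]
    · have heq : rexp (hA.eigenvalues i) = rexp (hB.eigenvalues j) := by
        have h' := hint i j
        rw [mul_comm _ (rexp (hB.eigenvalues j))] at h'
        exact mul_right_cancel₀ hw h'
      have : hA.eigenvalues i = hB.eigenvalues j := Real.exp_injective heq
      rw [this, mul_comm]
  have := rebuild (unit2 hA) (unit2 hB) hint2
  rw [← spec hA, ← spec hB] at this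
  exact this

/-- the Gibbs variational principle: inequality and equality case -/
lemma gibbs_main {S X : Matrix (Fin n) (Fin n) ℝ} (hS : S.IsHermitian) (hX : X.PosDef) :
    ((S * X).trace + X.trace - vnEntropy X ≤ (NormedSpace.exp S).trace) ∧
    ((S * X).trace + X.trace - vnEntropy X = (NormedSpace.exp S).trace →
      X = NormedSpace.exp S) := by
  have hXh : X.IsHermitian := hX.1
  set U : Matrix (Fin n) (Fin n) ℝ := (hS.eigenvectorUnitary : Matrix (Fin n) (Fin n) ℝ) with hU
  set V : Matrix (Fin n) (Fin n) ℝ := (hXh.eigenvectorUnitary : Matrix (Fin n) (Fin n) ℝ) with hV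
  set s := hS.eigenvalues with hs
  set x := hXh.eigenvalues with hx
  set W : Matrix (Fin n) (Fin n) ℝ := star V * U with hW
  have hxpos : ∀ i, 0 < x i := fun i => hX.eigenvalues_pos i
  have hW1 : W * star W = 1 := prod_unit1 (unit2 hS) (unit1 hXh)
  have hW2 : star W * W = 1 := prod_unit2 (unit1 hS) (unit2 hXh)
  have hrow := row_sq_sum hW1
  have hcol := col_sq_sum hW2
  set F : Fin n × Fin n → ℝ :=
    fun p => (W p.1 p.2) ^ 2 * (x p.1 * s p.2 + x p.1 - x p.1 * Real.log (x p.1)) with hF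
  set G : Fin n × Fin n → ℝ := fun p => (W p.1 p.2) ^ 2 * rexp (s p.2) with hG
  have hFG : ∀ p : Fin n × Fin n, F p ≤ G p := by
    intro p
    exact mul_le_mul_of_nonneg_left (scalar_gibbs (hxpos p.1)) (sq_nonneg _)
  have hLHS : (S * X).trace + X.trace - vnEntropy X = ∑ p : Fin n × Fin n, F p := by
    have h1 : (S * X).trace = ∑ i, ∑ j, (W i j) ^ 2 * (x i * s j) := trace_mul_eig hS hXh
    have h2 : X.trace = ∑ i, ∑ j, (W i j) ^ 2 * x i := by
      have : X.trace = ∑ i, x i := by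
        conv_lhs => rw [spec hXh]
        exact trace_conj_diag (unit1 hXh) x
      rw [this]
      apply Finset.sum_congr rfl
      intro i _
      rw [← Finset.sum_mul, hrow i, one_mul]
    have h3 : vnEntropy X = ∑ i, ∑ j, (W i j) ^ 2 * (x i * Real.log (x i)) := by
      rw [vnEntropy, dif_pos hXh]
      apply Finset.sum_congr rfl
      intro i _
      rw [← Finset.sum_mul, hrow i, one_mul]
    rw [h1, h2, h3, Fintype.sum_prod_type]
    have hexp : ∀ i j, F (i, j)
        = W i j ^ 2 * (x i * s j) + W i j ^ 2 * x i - W i j ^ 2 * (x i * Real.log (x i)) := by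
      intro i j
      rw [hF]
      ring
    simp only [hexp, Finset.sum_add_distrib, Finset.sum_sub_distrib]
  have hRHS : (NormedSpace.exp S).trace = ∑ p : Fin n × Fin n, G p := by
    rw [trace_exp hS, Fintype.sum_prod_type_right]
    apply Finset.sum_congr rfl
    intro j _
    simp only [hG]
    rw [← Finset.sum_mul, hcol j, one_mul]
  constructor
  · rw [hLHS, hRHS]
    exact Finset.sum_le_sum (fun p _ => hFG p)
  · intro heq
    rw [hLHS, hRHS] at heq
    have hpt : ∀ p : Fin n × Fin n, F p = G p := by
      by_contra hc
      push_neg at hc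
      obtain ⟨p0, hp0⟩ := hc
      have : ∑ p : Fin n × Fin n, F p < ∑ p : Fin n × Fin n, G p :=
        Finset.sum_lt_sum (fun p _ => hFG p)
          ⟨p0, Finset.mem_univ _, lt_of_le_of_ne (hFG p0) hp0⟩
      exact absurd heq (ne_of_lt this)
    have hint : ∀ i j, x i * W i j = W i j * rexp (s j) := by
      intro i j
      by_cases hw : W i j = 0
      · rw [hw, mul_zero, zero_mul]
      · have h' := hpt (i, j)
        rw [hF, hG] at h'
        simp only at h'
        have hcan : x i * s j + x i - x i * Real.log (x i) = rexp (s j) :=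
          mul_left_cancel₀ (pow_ne_zero 2 hw) h'
        have : x i = rexp (s j) := scalar_gibbs_eq (hxpos i) hcan
        rw [this, mul_comm]
    have := rebuild (unit2 hXh) (unit2 hS) hint
    rw [← spec hXh] at this
    rw [this, exp_spec hS]


end SDPAux

/-- For every `λ ∈ ℝ^m`, the Lagrangian dual function
`Ĝ_ε(λ) := b·λ + inf{ Tr((C − 𝒜*λ)·X) + ε·Tr(X·ln X) : X ≻ 0 }` satisfies
`Ĝ_ε(λ) = b·λ − ε·Tr(X(λ))` with `X(λ) = exp((𝒜*λ − C)/ε − I)`, the infimum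
being attained uniquely at `X(λ)`; moreover if `𝒜*` is injective then `Ĝ_ε` is
strictly concave on `ℝ^m`. -/
theorem SDP_dual_function_formula {n m : ℕ}
    (𝒜 : Matrix (Fin n) (Fin n) ℝ →ₗ[ℝ] (Fin m → ℝ))
    (Astar : (Fin m → ℝ) →ₗ[ℝ] Matrix (Fin n) (Fin n) ℝ)
    (hadj : ∀ (lam : Fin m → ℝ) (X : Matrix (Fin n) (Fin n) ℝ),
      ((Astar lam) * X).trace = lam ⬝ᵥ 𝒜 X)
    (hAstarSym : ∀ lam, (Astar lam).IsHermitian)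
    (b : Fin m → ℝ) (C : Matrix (Fin n) (Fin n) ℝ) (hC : C.IsHermitian)
    (ε : ℝ) (hε : 0 < ε)
    (Ghat : (Fin m → ℝ) → ℝ)
    (hGhat : ∀ lam, Ghat lam = b ⬝ᵥ lam +
      sInf {v : ℝ | ∃ X : Matrix (Fin n) (Fin n) ℝ, X.PosDef ∧
        v = ((C - Astar lam) * X).trace + ε * vnEntropy X})
    (Xlam : (Fin m → ℝ) → Matrix (Fin n) (Fin n) ℝ)
    (hXlam : ∀ lam, Xlam lam = NormedSpace.exp (ε⁻¹ • (Astar lam - C) - 1)) :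
    (∀ lam, (Xlam lam).PosDef) ∧
    (∀ (lam : Fin m → ℝ) (X : Matrix (Fin n) (Fin n) ℝ), X.PosDef →
      ((C - Astar lam) * Xlam lam).trace + ε * vnEntropy (Xlam lam) ≤
        ((C - Astar lam) * X).trace + ε * vnEntropy X) ∧
    (∀ (lam : Fin m → ℝ) (X : Matrix (Fin n) (Fin n) ℝ), X.PosDef →
      ((C - Astar lam) * X).trace + ε * vnEntropy X =
        ((C - Astar lam) * Xlam lam).trace + ε * vnEntropy (Xlam lam) →
      X = Xlam lam) ∧
    (∀ lam, Ghat lam = b ⬝ᵥ lam - ε * (Xlam lam).trace) ∧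
    (Function.Injective Astar → StrictConcaveOn ℝ Set.univ Ghat) := by
  set Sl : (Fin m → ℝ) → Matrix (Fin n) (Fin n) ℝ :=
    fun lam => ε⁻¹ • (Astar lam - C) - 1 with hSl
  have hSherm : ∀ lam, (Sl lam).IsHermitian := by
    intro lam
    apply Matrix.IsHermitian.sub
    · have h0 := (hAstarSym lam).sub hC
      unfold Matrix.IsHermitian at *
      rw [Matrix.conjTranspose_smul, h0, star_trivial]
    · exact Matrix.isHermitian_one
  have hXpos : ∀ lam, (Xlam lam).PosDef := by
    intro lam
    rw [hXlam lam, SDPAux.exp_spec (hSherm lam)]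
    exact SDPAux.posDef_conj_diag (SDPAux.unit1 _) (SDPAux.unit2 _) (fun i => Real.exp_pos _)
  have hobj : ∀ lam (X : Matrix (Fin n) (Fin n) ℝ),
      ((C - Astar lam) * X).trace + ε * vnEntropy X
      = -ε * ((Sl lam * X).trace + X.trace - vnEntropy X) := by
    intro lam X
    have hCA : C - Astar lam = (-ε) • Sl lam + (-ε) • (1 : Matrix (Fin n) (Fin n) ℝ) := by
      simp only [hSl]
      rw [smul_sub, smul_smul, neg_mul, mul_inv_cancel₀ (ne_of_gt hε)]
      rw [neg_smul, neg_smul, one_smul]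
      abel
    rw [hCA, Matrix.add_mul, Matrix.smul_mul, Matrix.smul_mul, Matrix.one_mul,
      Matrix.trace_add, Matrix.trace_smul, Matrix.trace_smul]
    simp only [smul_eq_mul]
    ring
  have hval : ∀ lam, ((C - Astar lam) * Xlam lam).trace + ε * vnEntropy (Xlam lam)
      = -ε * (Xlam lam).trace := by
    intro lam
    rw [hobj lam (Xlam lam), hXlam lam, SDPAux.gibbs_attained (hSherm lam)]
  have part2 : ∀ (lam : Fin m → ℝ) (X : Matrix (Fin n) (Fin n) ℝ), X.PosDef →
      ((C - Astar lam) * Xlam lam).trace + ε * vnEntropy (Xlam lam) ≤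
        ((C - Astar lam) * X).trace + ε * vnEntropy X := by
    intro lam X hX
    rw [hval lam, hobj lam X]
    have hg := (SDPAux.gibbs_main (hSherm lam) hX).1
    have hT : (NormedSpace.exp (Sl lam)).trace = (Xlam lam).trace := by rw [hXlam lam]
    rw [hT] at hg
    nlinarith [hg]
  have part3 : ∀ (lam : Fin m → ℝ) (X : Matrix (Fin n) (Fin n) ℝ), X.PosDef →
      ((C - Astar lam) * X).trace + ε * vnEntropy X =
        ((C - Astar lam) * Xlam lam).trace + ε * vnEntropy (Xlam lam) →
      X = Xlam lam := by
    intro lam X hX heq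
    rw [hval lam, hobj lam X] at heq
    have hQ : (Sl lam * X).trace + X.trace - vnEntropy X = (Xlam lam).trace :=
      mul_left_cancel₀ (neg_ne_zero.mpr (ne_of_gt hε)) heq
    rw [hXlam lam] at hQ ⊢
    exact (SDPAux.gibbs_main (hSherm lam) hX).2 hQ
  have part4 : ∀ lam, Ghat lam = b ⬝ᵥ lam - ε * (Xlam lam).trace := by
    intro lam
    rw [hGhat lam]
    set Sv : Set ℝ := {v : ℝ | ∃ X : Matrix (Fin n) (Fin n) ℝ, X.PosDef ∧
        v = ((C - Astar lam) * X).trace + ε * vnEntropy X} with hSv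
    have hmem : (-ε * (Xlam lam).trace) ∈ Sv := ⟨Xlam lam, hXpos lam, (hval lam).symm⟩
    have hlb : ∀ v ∈ Sv, -ε * (Xlam lam).trace ≤ v := by
      rintro v ⟨X, hX, rfl⟩
      have := part2 lam X hX
      rwa [hval lam] at this
    have hinf : sInf Sv = -ε * (Xlam lam).trace :=
      le_antisymm (csInf_le ⟨_, hlb⟩ hmem) (le_csInf ⟨_, hmem⟩ hlb)
    rw [hinf]
    ring
  refine ⟨hXpos, part2, part3, part4, ?_⟩
  intro hinj
  refine ⟨convex_univ, ?_⟩
  intro u _ v _ huv a c ha hc hac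
  have hc' : c = 1 - a := by linarith
  subst hc'
  set ν : Fin m → ℝ := a • u + (1 - a) • v with hν
  have hSaff : Sl ν = a • Sl u + (1 - a) • Sl v := by
    simp only [hSl, hν, map_add, _root_.map_smul]
    module
  have hXν : (NormedSpace.exp (Sl ν)).PosDef := by
    rw [SDPAux.exp_spec (hSherm ν)]
    exact SDPAux.posDef_conj_diag (SDPAux.unit1 _) (SDPAux.unit2 _) (fun i => Real.exp_pos _)
  set Xν : Matrix (Fin n) (Fin n) ℝ := NormedSpace.exp (Sl ν) with hXνdef
  have hgu := SDPAux.gibbs_main (hSherm u) hXν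
  have hgv := SDPAux.gibbs_main (hSherm v) hXν
  set Qu : ℝ := (Sl u * Xν).trace + Xν.trace - vnEntropy Xν with hQu
  set Qv : ℝ := (Sl v * Xν).trace + Xν.trace - vnEntropy Xν with hQv
  -- trace of Xν as convex combination of Qu, Qv
  have htr : Xν.trace = a * Qu + (1 - a) * Qv := by
    have hE1 : Xν.trace = (Sl ν * Xν).trace + Xν.trace - vnEntropy Xν :=
      (SDPAux.gibbs_attained (hSherm ν)).symm
    have hE2 : (Sl ν * Xν).trace = a * (Sl u * Xν).trace + (1 - a) * (Sl v * Xν).trace := by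
      rw [hSaff, Matrix.add_mul, Matrix.smul_mul, Matrix.smul_mul,
        Matrix.trace_add, Matrix.trace_smul, Matrix.trace_smul]
      simp only [smul_eq_mul]
    rw [hQu, hQv]
    rw [hE2] at hE1
    nlinarith [hE1]
  have hne : ¬(Qu = (NormedSpace.exp (Sl u)).trace ∧
      Qv = (NormedSpace.exp (Sl v)).trace) := by
    rintro ⟨h1, h2⟩
    have hXu : Xν = NormedSpace.exp (Sl u) := hgu.2 h1
    have hXv : Xν = NormedSpace.exp (Sl v) := hgv.2 h2
    have hSuv : Sl u = Sl v :=
      SDPAux.exp_inj (hSherm u) (hSherm v) (hXu.symm.trans hXv)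
    have hAuv : Astar u = Astar v := by
      have h3 : ε⁻¹ • (Astar u - C) = ε⁻¹ • (Astar v - C) := by
        have := congrArg (fun M => M + (1 : Matrix (Fin n) (Fin n) ℝ)) hSuv
        simpa [hSl, sub_add_cancel] using this
      have h4 : Astar u - C = Astar v - C :=
        smul_right_injective _ (inv_ne_zero (ne_of_gt hε)) h3
      have := congrArg (fun M => M + C) h4
      simpa [sub_add_cancel] using this
    exact huv (hinj hAuv)
  have hlt : Xν.trace < a * (NormedSpace.exp (Sl u)).trace
      + (1 - a) * (NormedSpace.exp (Sl v)).trace := by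
    rw [htr]
    rcases lt_or_eq_of_le hgu.1 with h1 | h1
    · have h2 := hgv.1
      have hc1 : (0:ℝ) < 1 - a := hc
      nlinarith
    · have h2 : Qv < (NormedSpace.exp (Sl v)).trace := by
        rcases lt_or_eq_of_le hgv.1 with h2 | h2
        · exact h2
        · exact absurd ⟨h1, h2⟩ hne
      have hc1 : (0:ℝ) < 1 - a := hc
      nlinarith
  -- final computation
  rw [part4 u, part4 v, part4 ν]
  have hdot : b ⬝ᵥ ν = a * (b ⬝ᵥ u) + (1 - a) * (b ⬝ᵥ v) := by
    simp only [hν, dotProduct_add, dotProduct_smul, smul_eq_mul]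
  have hTu : (Xlam u).trace = (NormedSpace.exp (Sl u)).trace := by rw [hXlam u]
  have hTv : (Xlam v).trace = (NormedSpace.exp (Sl v)).trace := by rw [hXlam v]
  have hTν : (Xlam ν).trace = Xν.trace := by rw [hXlam ν, hXνdef]
  rw [hTu, hTv, hTν] at *
  simp only [smul_eq_mul]
  nlinarith [hlt, hε, hdot]
end

section
/- (Trace inequality.) Let A and B be n×n real symmetric matrices with B positive semidefinite. Let λ^A_1 ≤ ⋯ ≤ λ^A_n and λ^B_1 ≤ ⋯ ≤ λ^B_n be their respective eigenvalues arranged in increasing order. Then Σ_{j=1}^n λ^A_j · λ^B_{n+1−j} ≤ Tr(A·B) ≤ Σ_{j=1}^n λ^A_j · λ^B_j. -/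
open Matrix Real Finset

/-- Key combinatorial lemma: for a doubly stochastic matrix `S` and monotone `a`, `b`,
the bilinear sum `∑ᵢⱼ Sᵢⱼ aᵢ bⱼ` lies between the anti-sorted and sorted dot products. -/
lemma ds_bilinear_bound {n : ℕ} (S : Matrix (Fin n) (Fin n) ℝ)
    (hS : S ∈ doublyStochastic ℝ (Fin n)) (a b : Fin n → ℝ)
    (ha : Monotone a) (hb : Monotone b) :
    (∑ i, a i * b i.rev) ≤ (∑ i, ∑ j, S i j * (a i * b j)) ∧
      (∑ i, ∑ j, S i j * (a i * b j)) ≤ ∑ i, a i * b i := by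
  obtain ⟨w, hw0, hw1, hwS⟩ := exists_eq_sum_perm_of_mem_doublyStochastic hS
  have hmono : Monovary a b := ha.monovary hb
  have hbr : Antitone (b ∘ Fin.rev) := fun i j hij => hb (Fin.rev_le_rev.mpr hij)
  have hanti : Antivary a (b ∘ Fin.rev) := ha.antivary hbr
  have key : ∀ (σ : Equiv.Perm (Fin n)) (i : Fin n),
      (∑ j, (σ.permMatrix ℝ) i j * (a i * b j)) = a i * b (σ i) := by
    intro σ i
    simp [PEquiv.toMatrix_apply, Equiv.toPEquiv_apply, ite_mul, Finset.sum_ite_eq']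
  have hmain : (∑ i, ∑ j, S i j * (a i * b j))
      = ∑ σ : Equiv.Perm (Fin n), w σ * ∑ i, a i * b (σ i) := by
    have e1 : (∑ i, ∑ j, S i j * (a i * b j))
        = ∑ i, ∑ j, ∑ σ : Equiv.Perm (Fin n), (w σ * (σ.permMatrix ℝ) i j) * (a i * b j) := by
      rw [← hwS]
      simp [Matrix.sum_apply, Finset.sum_mul]
    rw [e1]
    rw [show (∑ i, ∑ j, ∑ σ : Equiv.Perm (Fin n), (w σ * (σ.permMatrix ℝ) i j) * (a i * b j))
        = ∑ σ : Equiv.Perm (Fin n), ∑ i, ∑ j, (w σ * (σ.permMatrix ℝ) i j) * (a i * b j) from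
      (Finset.sum_congr rfl fun i _ => Finset.sum_comm).trans Finset.sum_comm]
    refine Finset.sum_congr rfl fun σ _ => ?_
    rw [Finset.mul_sum]
    refine Finset.sum_congr rfl fun i _ => ?_
    rw [← key σ i, Finset.mul_sum]
    exact Finset.sum_congr rfl fun j _ => by ring
  constructor
  · rw [hmain]
    have h0 : (∑ i, a i * b i.rev) = ∑ σ : Equiv.Perm (Fin n), w σ * ∑ i, a i * b i.rev := by
      rw [← Finset.sum_mul, hw1, one_mul]
    rw [h0]
    refine Finset.sum_le_sum fun σ _ => mul_le_mul_of_nonneg_left ?_ (hw0 σ)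
    have h := hanti.sum_mul_le_sum_mul_comp_perm (σ := σ.trans (Fin.revPerm))
    simpa [Function.comp, Fin.rev_rev] using h
  · rw [hmain]
    have h0 : (∑ i, a i * b i) = ∑ σ : Equiv.Perm (Fin n), w σ * ∑ i, a i * b i := by
      rw [← Finset.sum_mul, hw1, one_mul]
    rw [h0]
    refine Finset.sum_le_sum fun σ _ => mul_le_mul_of_nonneg_left ?_ (hw0 σ)
    exact hmono.sum_mul_comp_perm_le_sum_mul (σ := σ)

lemma trace_mul_eq_ds_sum {n : ℕ}
    (A B : Matrix (Fin n) (Fin n) ℝ) (hA : A.IsHermitian) (hB : B.IsHermitian) :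
    ∃ S : Matrix (Fin n) (Fin n) ℝ, S ∈ doublyStochastic ℝ (Fin n) ∧
      (A * B).trace = ∑ i, ∑ j, S i j * (hA.eigenvalues i * hB.eigenvalues j) := by
  set U : Matrix (Fin n) (Fin n) ℝ := (hA.eigenvectorUnitary : Matrix (Fin n) (Fin n) ℝ) with hU
  set V : Matrix (Fin n) (Fin n) ℝ := (hB.eigenvectorUnitary : Matrix (Fin n) (Fin n) ℝ) with hV
  have hUm : U ∈ Matrix.unitaryGroup (Fin n) ℝ := hA.eigenvectorUnitary.2
  have hVm : V ∈ Matrix.unitaryGroup (Fin n) ℝ := hB.eigenvectorUnitary.2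
  set W : Matrix (Fin n) (Fin n) ℝ := star U * V with hW
  have hWm : W ∈ Matrix.unitaryGroup (Fin n) ℝ := mul_mem (Unitary.star_mem hUm) hVm
  have hofA : (RCLike.ofReal ∘ hA.eigenvalues : Fin n → ℝ) = hA.eigenvalues := by
    funext i; simp
  have hofB : (RCLike.ofReal ∘ hB.eigenvalues : Fin n → ℝ) = hB.eigenvalues := by
    funext i; simp
  have hAe : A = U * diagonal hA.eigenvalues * star U := by
    have := hA.spectral_theorem
    rwa [hofA] at this
  have hBe : B = V * diagonal hB.eigenvalues * star V := by
    have := hB.spectral_theorem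
    rwa [hofB] at this
  refine ⟨fun i j => (W i j) ^ 2, ?_, ?_⟩
  · refine (mem_doublyStochastic_iff_sum).mpr ?_
    refine ⟨fun i j => sq_nonneg _, fun i => ?_, fun j => ?_⟩
    · have h1 : W * star W = 1 := (Matrix.mem_unitaryGroup_iff).mp hWm
      have h2 := congrFun (congrFun h1 i) i
      simp only [Matrix.mul_apply, Matrix.one_apply_eq, Matrix.star_apply, star_trivial] at h2
      rw [← h2]
      exact Finset.sum_congr rfl fun j _ => by ring
    · have h1 : star W * W = 1 := (Matrix.mem_unitaryGroup_iff').mp hWm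
      have h2 := congrFun (congrFun h1 j) j
      simp only [Matrix.mul_apply, Matrix.one_apply_eq, Matrix.star_apply, star_trivial] at h2
      rw [← h2]
      exact Finset.sum_congr rfl fun i _ => by ring
  · have htr : (A * B).trace
        = (diagonal hA.eigenvalues * W * diagonal hB.eigenvalues * star W).trace := by
      conv_lhs => rw [hAe, hBe]
      calc (U * diagonal hA.eigenvalues * star U * (V * diagonal hB.eigenvalues * star V)).trace
          = (U * (diagonal hA.eigenvalues * star U *
              (V * diagonal hB.eigenvalues * star V))).trace := by
            simp only [Matrix.mul_assoc]
        _ = ((diagonal hA.eigenvalues * star U *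
              (V * diagonal hB.eigenvalues * star V)) * U).trace := Matrix.trace_mul_comm _ _
        _ = (diagonal hA.eigenvalues * W * diagonal hB.eigenvalues * star W).trace := by
            rw [hW, StarMul.star_mul, star_star]
            simp only [Matrix.mul_assoc]
    rw [htr]
    simp only [Matrix.trace, Matrix.diag_apply, Matrix.mul_apply (M := diagonal hA.eigenvalues
      * W * diagonal hB.eigenvalues)]
    refine Finset.sum_congr rfl fun i _ => ?_
    refine Finset.sum_congr rfl fun j _ => ?_
    rw [Matrix.mul_diagonal, Matrix.diagonal_mul, Matrix.star_apply, star_trivial]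
    ring

/-- Trace inequality: for real symmetric `A`, `B` with `B ⪰ 0`,
if `μA` and `μB` list the eigenvalues of `A` and `B` (with multiplicity) in
increasing order, then `∑ⱼ μAⱼ·μB_{n+1−j} ≤ Tr(A·B) ≤ ∑ⱼ μAⱼ·μBⱼ`. -/
theorem trace_eigenvalue_inequality {n : ℕ}
    (A B : Matrix (Fin n) (Fin n) ℝ) (hA : A.IsHermitian) (hB : B.PosSemidef)
    (μA μB : Fin n → ℝ) (hmonoA : Monotone μA) (hmonoB : Monotone μB)
    (hμA : ∃ e : Equiv.Perm (Fin n), ∀ i, μA i = hA.eigenvalues (e i))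
    (hμB : ∃ e : Equiv.Perm (Fin n), ∀ i, μB i = hB.1.eigenvalues (e i)) :
    (∑ j, μA j * μB j.rev) ≤ (A * B).trace ∧ (A * B).trace ≤ ∑ j, μA j * μB j := by
  obtain ⟨eA, heA⟩ := hμA
  obtain ⟨eB, heB⟩ := hμB
  obtain ⟨S, hS, htr⟩ := trace_mul_eq_ds_sum A B hA hB.1
  set S' : Matrix (Fin n) (Fin n) ℝ := fun i j => S (eA i) (eB j) with hS'
  have hS'mem : S' ∈ doublyStochastic ℝ (Fin n) := by
    rw [mem_doublyStochastic_iff_sum] at hS ⊢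
    refine ⟨fun i j => hS.1 _ _, fun i => ?_, fun j => ?_⟩
    · rw [show (∑ j, S' i j) = ∑ j, S (eA i) (eB j) from rfl,
        Equiv.sum_comp eB (fun j => S (eA i) j)]
      exact hS.2.1 _
    · rw [show (∑ i, S' i j) = ∑ i, S (eA i) (eB j) from rfl,
        Equiv.sum_comp eA (fun i => S i (eB j))]
      exact hS.2.2 _
  have htr' : (A * B).trace = ∑ i, ∑ j, S' i j * (μA i * μB j) := by
    rw [htr]
    rw [← Equiv.sum_comp eA (fun i => ∑ j, S i j * (hA.eigenvalues i * hB.1.eigenvalues j))]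
    refine Finset.sum_congr rfl fun i _ => ?_
    rw [← Equiv.sum_comp eB (fun j => S (eA i) j * (hA.eigenvalues (eA i) * hB.1.eigenvalues j))]
    refine Finset.sum_congr rfl fun j _ => ?_
    rw [heA, heB]
  rw [htr']
  exact ds_bilinear_bound S' hS'mem μA μB hmonoA hmonoB
end

section
/- (Asymptotics of the regularized SDP solutions.) Let 𝒜 : S^n → ℝ^m be a linear map, b ∈ ℝ^m, C ∈ S^n, and assume Ω = { X ∈ S^n : 𝒜(X) = b, X ⪰ 0 } is nonempty and compact. For each ε > 0 let X*(ε) be a minimizer of Tr(C·X) + ε·g(X) over Ω. Then Tr(C·X*(ε)) → ρ := min{ Tr(C·X) : X ∈ Ω } as ε ↓ 0, and for every sequence ε_k ↓ 0 the sequence X*(ε_k) converges to the unique matrix X* in the set S = argmin{ Tr(C·X) : X ∈ Ω } that minimizes the von Neumann entropy g over S. -/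
open Matrix Real Filter Topology
open scoped Classical

set_option maxHeartbeats 1600000

lemma vnEntropy_eq {n : ℕ} {X : Matrix (Fin n) (Fin n) ℝ} (hX : X.IsHermitian) :
    vnEntropy X = ∑ i, hX.eigenvalues i * Real.log (hX.eigenvalues i) := dif_pos hX

section auxlemmas
open Polynomial


/-- Conjugation by a unitary matrix, as an algebra homomorphism. -/
noncomputable def conjAH {n : ℕ} (U : Matrix (Fin n) (Fin n) ℝ)
    (h1 : U * star U = 1) (h2 : star U * U = 1) :
    Matrix (Fin n) (Fin n) ℝ →ₐ[ℝ] Matrix (Fin n) (Fin n) ℝ where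
  toFun A := U * A * star U
  map_one' := by show U * 1 * star U = 1; rw [mul_one, h1]
  map_mul' A B := by
    show U * (A * B) * star U = (U * A * star U) * (U * B * star U)
    simp only [mul_assoc]
    rw [show star U * (U * (B * star U)) = B * star U from by rw [← mul_assoc, h2, one_mul]]
  map_zero' := by show U * 0 * star U = 0; simp
  map_add' A B := by show U * (A + B) * star U = _; rw [mul_add, add_mul]
  commutes' r := by
    show U * algebraMap ℝ _ r * star U = algebraMap ℝ _ r
    simp only [Algebra.algebraMap_eq_smul_one]
    rw [mul_smul_comm, mul_one, smul_mul_assoc, h1]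

lemma trace_aeval {n : ℕ} {X : Matrix (Fin n) (Fin n) ℝ} (hX : X.IsHermitian) (q : ℝ[X]) :
    (Polynomial.aeval X q).trace = ∑ i, q.eval (hX.eigenvalues i) := by
  set U : Matrix (Fin n) (Fin n) ℝ := (hX.eigenvectorUnitary : Matrix (Fin n) (Fin n) ℝ) with hU
  have h1 : U * star U = 1 := Matrix.mem_unitaryGroup_iff.mp hX.eigenvectorUnitary.2
  have h2 : star U * U = 1 := Matrix.mem_unitaryGroup_iff'.mp hX.eigenvectorUnitary.2
  have hdiag : (Matrix.diagonal (RCLike.ofReal ∘ hX.eigenvalues) : Matrix (Fin n) (Fin n) ℝ)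
      = Matrix.diagonal hX.eigenvalues := rfl
  have hsp : X = conjAH U h1 h2 (Matrix.diagonal hX.eigenvalues) := by
    rw [show conjAH U h1 h2 (Matrix.diagonal hX.eigenvalues)
      = U * Matrix.diagonal hX.eigenvalues * star U from rfl, ← hdiag]
    exact hX.spectral_theorem
  have haev : Polynomial.aeval X q
      = U * (Polynomial.aeval (Matrix.diagonal hX.eigenvalues) q) * star U := by
    conv_lhs => rw [hsp]
    rw [Polynomial.aeval_algHom_apply]
    rfl
  have hev : ∀ (d : Fin n → ℝ), Polynomial.aeval d q = fun i => q.eval (d i) := by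
    intro d; funext i
    have h3 := Polynomial.aeval_algHom_apply (Pi.evalAlgHom ℝ (fun _ : Fin n => ℝ) i) d q
    rw [show (Polynomial.aeval d q) i = Pi.evalAlgHom ℝ (fun _ : Fin n => ℝ) i
      (Polynomial.aeval d q) from rfl, ← h3]
    exact congrFun (Polynomial.coe_aeval_eq_eval (d i)) q
  have hdg : Polynomial.aeval (Matrix.diagonal hX.eigenvalues) q
      = Matrix.diagonal (fun i => q.eval (hX.eigenvalues i)) := by
    calc Polynomial.aeval (Matrix.diagonal hX.eigenvalues) q
        = Polynomial.aeval (Matrix.diagonalAlgHom (R := ℝ) (α := ℝ) (n := Fin n)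
            hX.eigenvalues) q := rfl
      _ = Matrix.diagonalAlgHom (R := ℝ) (α := ℝ) (n := Fin n)
            (Polynomial.aeval hX.eigenvalues q) := Polynomial.aeval_algHom_apply _ _ _
      _ = Matrix.diagonal (fun i => q.eval (hX.eigenvalues i)) := by
            rw [hev hX.eigenvalues]; rfl
  rw [haev, Matrix.trace_mul_cycle, h2, one_mul, hdg, Matrix.trace_diagonal]

lemma trace_eq_sum_eig {n : ℕ} {X : Matrix (Fin n) (Fin n) ℝ} (hX : X.IsHermitian) :
    X.trace = ∑ i, hX.eigenvalues i := by
  simpa using trace_aeval hX Polynomial.X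



lemma eig_mem_Icc {n : ℕ} {X : Matrix (Fin n) (Fin n) ℝ} (hX : X.PosSemidef) {M : ℝ}
    (hM : X.trace ≤ M) (i : Fin n) : hX.1.eigenvalues i ∈ Set.Icc (0:ℝ) M := by
  refine ⟨hX.eigenvalues_nonneg i, ?_⟩
  calc hX.1.eigenvalues i ≤ ∑ j, hX.1.eigenvalues j :=
        Finset.single_le_sum (f := fun j => hX.1.eigenvalues j)
          (fun j _ => hX.eigenvalues_nonneg j) (Finset.mem_univ i)
    _ = X.trace := (trace_eq_sum_eig hX.1).symm
    _ ≤ M := hM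

lemma continuousOn_vnEntropy {n : ℕ} {K : Set (Matrix (Fin n) (Fin n) ℝ)}
    (hK : IsCompact K) (hpsd : ∀ X ∈ K, X.PosSemidef) : ContinuousOn vnEntropy K := by
  rcases K.eq_empty_or_nonempty with rfl | hKne
  · exact continuousOn_empty _
  -- a bound on traces
  have htrc : Continuous fun X : Matrix (Fin n) (Fin n) ℝ => X.trace :=
    continuous_id.matrix_trace
  obtain ⟨M₀, hM₀⟩ := (hK.image htrc).bddAbove
  set M : ℝ := max M₀ 0 with hMdef
  have hM : ∀ X ∈ K, X.trace ≤ M := fun X hX =>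
    le_trans (hM₀ (Set.mem_image_of_mem _ hX)) (le_max_left _ _)
  -- polynomial approximations of x log x on [0, M]
  have hcont : ContinuousOn (fun x : ℝ => x * Real.log x) (Set.Icc 0 M) :=
    Real.continuous_mul_log.continuousOn
  have hq : ∀ k : ℕ, ∃ q : ℝ[X], ∀ x ∈ Set.Icc (0:ℝ) M,
      |q.eval x - x * Real.log x| < 1 / (k + 1) := fun k =>
    exists_polynomial_near_of_continuousOn 0 M _ hcont _
      (by positivity)
  choose q hq using hq
  -- uniform convergence of trace polynomials to vnEntropy on K
  have key : TendstoUniformlyOn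
      (fun k X => (Polynomial.aeval X (q k)).trace) vnEntropy atTop K := by
    rw [Metric.tendstoUniformlyOn_iff]
    intro ε hε
    obtain ⟨N, hN⟩ := exists_nat_gt (n / ε)
    filter_upwards [Filter.eventually_ge_atTop N] with k hk X hXK
    have hX := hpsd X hXK
    have heig := fun i => eig_mem_Icc hX (hM X hXK) i
    have hsum : dist (vnEntropy X) ((Polynomial.aeval X (q k)).trace)
        ≤ ∑ i : Fin n, |(q k).eval (hX.1.eigenvalues i)
            - hX.1.eigenvalues i * Real.log (hX.1.eigenvalues i)| := by
      rw [vnEntropy_eq hX.1, trace_aeval hX.1, dist_eq_norm, ← Finset.sum_sub_distrib]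
      calc ‖∑ i : Fin n, (hX.1.eigenvalues i * Real.log (hX.1.eigenvalues i)
            - (q k).eval (hX.1.eigenvalues i))‖
          ≤ ∑ i : Fin n, ‖hX.1.eigenvalues i * Real.log (hX.1.eigenvalues i)
            - (q k).eval (hX.1.eigenvalues i)‖ := norm_sum_le _ _
        _ = ∑ i : Fin n, |(q k).eval (hX.1.eigenvalues i)
            - hX.1.eigenvalues i * Real.log (hX.1.eigenvalues i)| := by
            refine Finset.sum_congr rfl fun i _ => ?_
            rw [Real.norm_eq_abs, abs_sub_comm]
    have hterm : ∀ i : Fin n, |(q k).eval (hX.1.eigenvalues i)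
        - hX.1.eigenvalues i * Real.log (hX.1.eigenvalues i)| < 1 / (k + 1) :=
      fun i => hq k _ (heig i)
    have : dist (vnEntropy X) ((Polynomial.aeval X (q k)).trace) ≤ n * (1 / (k+1)) := by
      refine hsum.trans ?_
      calc ∑ i : Fin n, |(q k).eval (hX.1.eigenvalues i)
            - hX.1.eigenvalues i * Real.log (hX.1.eigenvalues i)|
          ≤ ∑ _i : Fin n, (1 / ((k:ℝ)+1)) :=
            Finset.sum_le_sum fun i _ => (hterm i).le
        _ = n * (1 / (k+1)) := by simp [Finset.sum_const, mul_comm]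
    refine lt_of_le_of_lt this ?_
    have hkN : (N:ℝ) ≤ k := Nat.cast_le.mpr hk
    have hk1 : (0:ℝ) < (k:ℝ) + 1 := by positivity
    have h2 : (n:ℝ) < ((k:ℝ)+1) * ε := by
      have h3 : (n:ℝ)/ε < (k:ℝ)+1 := lt_of_lt_of_le hN (by linarith)
      exact (div_lt_iff₀ hε).mp h3
    rw [mul_one_div]
    exact (div_lt_iff₀ hk1).mpr (by linarith)
  -- conclude
  refine key.continuousOn (Filter.Eventually.frequently ?_)
  filter_upwards [] with k
  have hc : Continuous fun X : Matrix (Fin n) (Fin n) ℝ => Polynomial.aeval X (q k) := by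
    rw [funext fun X => Polynomial.aeval_eq_sum_range (p := q k) X]
    exact continuous_finset_sum _ fun i _ =>
      (continuous_pow (M := Matrix (Fin n) (Fin n) ℝ) i).const_smul ((q k).coeff i)
  exact hc.matrix_trace.continuousOn



section aux
variable {n : ℕ}

lemma psd_smul {c : ℝ} (hc : 0 ≤ c) {M : Matrix (Fin n) (Fin n) ℝ} (hM : M.PosSemidef) :
    (c • M).PosSemidef := by
  constructor
  · show (c • M)ᴴ = c • M
    rw [Matrix.conjTranspose_smul, hM.1.eq, star_trivial]
  · exact (hM.smul hc).2

lemma mulVec_col (U V : Matrix (Fin n) (Fin n) ℝ) (i j : Fin n) :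
    (U *ᵥ (fun r => V r i)) j = (U * V) j i := by
  simp [Matrix.mulVec, dotProduct, Matrix.mul_apply]

lemma dot_mulVec_star (U : Matrix (Fin n) (Fin n) ℝ) (u w : Fin n → ℝ) :
    u ⬝ᵥ (U *ᵥ w) = (star U *ᵥ u) ⬝ᵥ w := by
  rw [Matrix.star_eq_conjTranspose, Matrix.conjTranspose_eq_transpose_of_trivial,
    Matrix.mulVec_transpose, Matrix.dotProduct_mulVec]

lemma quad_expand {A : Matrix (Fin n) (Fin n) ℝ} (hA : A.IsHermitian) (u : Fin n → ℝ) :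
    u ⬝ᵥ (A *ᵥ u) = ∑ j, ((star (hA.eigenvectorUnitary : Matrix (Fin n) (Fin n) ℝ) *ᵥ u) j)^2
      * hA.eigenvalues j := by
  set U : Matrix (Fin n) (Fin n) ℝ := (hA.eigenvectorUnitary : Matrix (Fin n) (Fin n) ℝ)
  set c : Fin n → ℝ := star U *ᵥ u with hc
  have hdiag : (Matrix.diagonal (RCLike.ofReal ∘ hA.eigenvalues) : Matrix (Fin n) (Fin n) ℝ)
      = Matrix.diagonal hA.eigenvalues := rfl
  conv_lhs => rw [hA.spectral_theorem]
  rw [Unitary.conjStarAlgAut_apply, hdiag, ← Matrix.mulVec_mulVec, ← Matrix.mulVec_mulVec, dot_mulVec_star, ← hc]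
  simp only [Matrix.mulVec_diagonal, dotProduct]
  exact Finset.sum_congr rfl fun j _ => by ring

lemma sum_sq_c {U : Matrix (Fin n) (Fin n) ℝ} (hU : U * star U = 1) (u : Fin n → ℝ) :
    ∑ j, ((star U *ᵥ u) j)^2 = u ⬝ᵥ u := by
  have h1 : ∑ j, ((star U *ᵥ u) j)^2 = (star U *ᵥ u) ⬝ᵥ (star U *ᵥ u) := by
    simp [dotProduct, pow_two]
  rw [h1, ← dot_mulVec_star, Matrix.mulVec_mulVec, hU, Matrix.one_mulVec]

lemma eigvec_reconstruct {A : Matrix (Fin n) (Fin n) ℝ} (hA : A.IsHermitian)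
    {u : Fin n → ℝ} {a : ℝ}
    (h : ∀ j, (star (hA.eigenvectorUnitary : Matrix (Fin n) (Fin n) ℝ) *ᵥ u) j ≠ 0 →
      hA.eigenvalues j = a) :
    A *ᵥ u = a • u := by
  set U : Matrix (Fin n) (Fin n) ℝ := (hA.eigenvectorUnitary : Matrix (Fin n) (Fin n) ℝ)
  have h1 : U * star U = 1 := Matrix.mem_unitaryGroup_iff.mp hA.eigenvectorUnitary.2
  set c : Fin n → ℝ := star U *ᵥ u with hc
  have hdiag : (Matrix.diagonal (RCLike.ofReal ∘ hA.eigenvalues) : Matrix (Fin n) (Fin n) ℝ)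
      = Matrix.diagonal hA.eigenvalues := rfl
  conv_lhs => rw [hA.spectral_theorem]
  rw [Unitary.conjStarAlgAut_apply, hdiag, ← Matrix.mulVec_mulVec, ← Matrix.mulVec_mulVec, ← hc]
  have hd : Matrix.diagonal hA.eigenvalues *ᵥ c = a • c := by
    funext j
    rw [Matrix.mulVec_diagonal]
    by_cases hcj : c j = 0
    · simp [hcj]
    · simp [h j hcj, mul_comm]
  rw [hd, Matrix.mulVec_smul, hc, Matrix.mulVec_mulVec, h1, Matrix.one_mulVec]

/-- Strict convexity (midpoint form) of the von Neumann entropy on PSD matrices. -/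
lemma vnEntropy_strict_mid {X Y : Matrix (Fin n) (Fin n) ℝ}
    (hX : X.PosSemidef) (hY : Y.PosSemidef) (hne : X ≠ Y) :
    vnEntropy ((2⁻¹ : ℝ) • (X + Y)) < 2⁻¹ * vnEntropy X + 2⁻¹ * vnEntropy Y := by
  set f : ℝ → ℝ := fun x => x * Real.log x with hf
  have hsc : StrictConvexOn ℝ (Set.Ici (0:ℝ)) f := Real.strictConvexOn_mul_log
  have hcv : ConvexOn ℝ (Set.Ici (0:ℝ)) f := hsc.convexOn
  set Z : Matrix (Fin n) (Fin n) ℝ := (2⁻¹ : ℝ) • (X + Y) with hZ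
  have hZpsd : Z.PosSemidef := psd_smul (by norm_num) (hX.add hY)
  have hZh : Z.IsHermitian := hZpsd.1
  set V : Matrix (Fin n) (Fin n) ℝ := (hZh.eigenvectorUnitary : Matrix (Fin n) (Fin n) ℝ)
    with hV
  have hV1 : V * star V = 1 := Matrix.mem_unitaryGroup_iff.mp hZh.eigenvectorUnitary.2
  have hV2 : star V * V = 1 := Matrix.mem_unitaryGroup_iff'.mp hZh.eigenvectorUnitary.2
  set u : Fin n → Fin n → ℝ := fun i => (fun r => V r i) with hu
  set μ : Fin n → ℝ := hZh.eigenvalues with hμ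
  -- unit norms
  have hunit : ∀ i, u i ⬝ᵥ u i = 1 := by
    intro i
    have : u i ⬝ᵥ u i = (star V * V) i i := by
      simp [hu, dotProduct, Matrix.mul_apply, Matrix.star_apply, mul_comm]
    rw [this, hV2, Matrix.one_apply_eq]
  -- eigen relation for Z
  have heigZ : ∀ i, Z *ᵥ u i = μ i • u i := by
    intro i
    have hcol : u i = ⇑(hZh.eigenvectorBasis i) := by
      funext r; exact hZh.eigenvectorUnitary_apply r i
    rw [hcol]; exact hZh.mulVec_eigenvectorBasis i
  set a : Fin n → ℝ := fun i => u i ⬝ᵥ (X *ᵥ u i) with ha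
  set b : Fin n → ℝ := fun i => u i ⬝ᵥ (Y *ᵥ u i) with hb
  have hμab : ∀ i, μ i = 2⁻¹ * a i + 2⁻¹ * b i := by
    intro i
    have h1 : u i ⬝ᵥ (Z *ᵥ u i) = μ i := by
      rw [heigZ i, dotProduct_smul, smul_eq_mul, hunit i, mul_one]
    have h2 : u i ⬝ᵥ (Z *ᵥ u i) = 2⁻¹ * a i + 2⁻¹ * b i := by
      rw [hZ, Matrix.smul_mulVec, Matrix.add_mulVec, dotProduct_smul,
        dotProduct_add]
      simp [ha, hb, mul_add]
    rw [← h1, h2]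
  have ha0 : ∀ i, 0 ≤ a i := fun i => by
    have := hX.dotProduct_mulVec_nonneg (u i); rwa [star_trivial] at this
  have hb0 : ∀ i, 0 ≤ b i := fun i => by
    have := hY.dotProduct_mulVec_nonneg (u i); rwa [star_trivial] at this
  -- Peierls data for X
  set UX : Matrix (Fin n) (Fin n) ℝ := (hX.1.eigenvectorUnitary : Matrix (Fin n) (Fin n) ℝ)
  have hUX1 : UX * star UX = 1 := Matrix.mem_unitaryGroup_iff.mp hX.1.eigenvectorUnitary.2
  set UY : Matrix (Fin n) (Fin n) ℝ := (hY.1.eigenvectorUnitary : Matrix (Fin n) (Fin n) ℝ)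
  have hUY1 : UY * star UY = 1 := Matrix.mem_unitaryGroup_iff.mp hY.1.eigenvectorUnitary.2
  set wX : Fin n → Fin n → ℝ := fun i j => ((star UX *ᵥ u i) j)^2 with hwX
  set wY : Fin n → Fin n → ℝ := fun i j => ((star UY *ᵥ u i) j)^2 with hwY
  have hwX0 : ∀ i j, 0 ≤ wX i j := fun i j => sq_nonneg _
  have hwY0 : ∀ i j, 0 ≤ wY i j := fun i j => sq_nonneg _
  have hwXsum : ∀ i, ∑ j, wX i j = 1 := fun i => by rw [hwX]; simp only
    [sum_sq_c hUX1 (u i), hunit i]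
  have hwYsum : ∀ i, ∑ j, wY i j = 1 := fun i => by rw [hwY]; simp only
    [sum_sq_c hUY1 (u i), hunit i]
  have haw : ∀ i, a i = ∑ j, wX i j • hX.1.eigenvalues j := fun i => by
    rw [ha]; simp only [smul_eq_mul]; exact quad_expand hX.1 (u i)
  have hbw : ∀ i, b i = ∑ j, wY i j • hY.1.eigenvalues j := fun i => by
    rw [hb]; simp only [smul_eq_mul]; exact quad_expand hY.1 (u i)
  have heigX0 : ∀ j, hX.1.eigenvalues j ∈ Set.Ici (0:ℝ) := fun j => hX.eigenvalues_nonneg j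
  have heigY0 : ∀ j, hY.1.eigenvalues j ∈ Set.Ici (0:ℝ) := fun j => hY.eigenvalues_nonneg j
  -- column sums of weights equal 1
  have hwXcol : ∀ j, ∑ i, wX i j = 1 := by
    intro j
    set P : Matrix (Fin n) (Fin n) ℝ := star UX * V with hP
    have hPc : ∀ i, (star UX *ᵥ u i) j = P j i := fun i => mulVec_col (star UX) V i j
    have hPP : P * star P = 1 := by
      rw [hP, Matrix.star_mul, star_star, mul_assoc, ← mul_assoc V, hV1, one_mul]
      exact Matrix.mem_unitaryGroup_iff'.mp hX.1.eigenvectorUnitary.2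
    calc ∑ i, wX i j = ∑ i, P j i * star P i j := by
          refine Finset.sum_congr rfl fun i _ => ?_
          rw [hwX]; simp only [hPc i, pow_two, Matrix.star_apply, star_trivial]
      _ = (P * star P) j j := (Matrix.mul_apply).symm
      _ = 1 := by rw [hPP, Matrix.one_apply_eq]
  have hwYcol : ∀ j, ∑ i, wY i j = 1 := by
    intro j
    set P : Matrix (Fin n) (Fin n) ℝ := star UY * V with hP
    have hPc : ∀ i, (star UY *ᵥ u i) j = P j i := fun i => mulVec_col (star UY) V i j
    have hPP : P * star P = 1 := by
      rw [hP, Matrix.star_mul, star_star, mul_assoc, ← mul_assoc V, hV1, one_mul]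
      exact Matrix.mem_unitaryGroup_iff'.mp hY.1.eigenvectorUnitary.2
    calc ∑ i, wY i j = ∑ i, P j i * star P i j := by
          refine Finset.sum_congr rfl fun i _ => ?_
          rw [hwY]; simp only [hPc i, pow_two, Matrix.star_apply, star_trivial]
      _ = (P * star P) j j := (Matrix.mul_apply).symm
      _ = 1 := by rw [hPP, Matrix.one_apply_eq]
  -- the three termwise inequalities
  have step1 : ∀ i, f (μ i) ≤ 2⁻¹ * f (a i) + 2⁻¹ * f (b i) := by
    intro i
    rw [hμab i]
    have := hcv.2 (ha0 i) (hb0 i) (by norm_num : (0:ℝ) ≤ 2⁻¹) (by norm_num : (0:ℝ) ≤ 2⁻¹)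
      (by norm_num : (2⁻¹:ℝ) + 2⁻¹ = 1)
    simpa [smul_eq_mul] using this
  have stepX : ∀ i, f (a i) ≤ ∑ j, wX i j • f (hX.1.eigenvalues j) := by
    intro i
    rw [haw i]
    exact hcv.map_sum_le (fun j _ => hwX0 i j) (hwXsum i) (fun j _ => heigX0 j)
  have stepY : ∀ i, f (b i) ≤ ∑ j, wY i j • f (hY.1.eigenvalues j) := by
    intro i
    rw [hbw i]
    exact hcv.map_sum_le (fun j _ => hwY0 i j) (hwYsum i) (fun j _ => heigY0 j)
  -- total sums
  have htotX : ∑ i, ∑ j, wX i j • f (hX.1.eigenvalues j) = vnEntropy X := by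
    rw [Finset.sum_comm, vnEntropy_eq hX.1]
    refine Finset.sum_congr rfl fun j _ => ?_
    rw [← Finset.sum_smul, hwXcol j, one_smul]
  have htotY : ∑ i, ∑ j, wY i j • f (hY.1.eigenvalues j) = vnEntropy Y := by
    rw [Finset.sum_comm, vnEntropy_eq hY.1]
    refine Finset.sum_congr rfl fun j _ => ?_
    rw [← Finset.sum_smul, hwYcol j, one_smul]
  have hZent : vnEntropy Z = ∑ i, f (μ i) := vnEntropy_eq hZh
  -- the grand chain, with equality analysis
  set A2 : Fin n → ℝ := fun i => 2⁻¹ * (∑ j, wX i j • f (hX.1.eigenvalues j))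
    + 2⁻¹ * (∑ j, wY i j • f (hY.1.eigenvalues j)) with hA2
  have hLA2 : ∀ i, f (μ i) ≤ A2 i := by
    intro i
    refine (step1 i).trans ?_
    have h1 := stepX i
    have h2 := stepY i
    rw [hA2]
    nlinarith [h1, h2]
  have hsumA2 : ∑ i, A2 i = 2⁻¹ * vnEntropy X + 2⁻¹ * vnEntropy Y := by
    rw [hA2, Finset.sum_add_distrib, ← Finset.mul_sum, ← Finset.mul_sum, htotX, htotY]
  by_contra hcon
  push_neg at hcon
  have heqtot : vnEntropy Z = 2⁻¹ * vnEntropy X + 2⁻¹ * vnEntropy Y := by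
    have hle : vnEntropy Z ≤ 2⁻¹ * vnEntropy X + 2⁻¹ * vnEntropy Y := by
      rw [hZent, ← hsumA2]
      exact Finset.sum_le_sum fun i _ => hLA2 i
    linarith
  have heqterm : ∀ i, f (μ i) = A2 i := by
    have := (Finset.sum_eq_sum_iff_of_le (fun i _ => hLA2 i)).mp
      (by rw [← hZent, heqtot, ← hsumA2] : ∑ i, f (μ i) = ∑ i, A2 i)
    exact fun i => this i (Finset.mem_univ i)
  -- from termwise equality, extract a i = b i, f(a i) = Peierls X, f(b i) = Peierls Y
  have hkey : ∀ i, X *ᵥ u i = Y *ᵥ u i := by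
    intro i
    have e1 := heqterm i
    have hX1 := stepX i
    have hY1 := stepY i
    have h1 := step1 i
    have heqa : f (a i) = ∑ j, wX i j • f (hX.1.eigenvalues j) := by
      rw [hA2] at e1; nlinarith [h1, hX1, hY1, e1]
    have heqb : f (b i) = ∑ j, wY i j • f (hY.1.eigenvalues j) := by
      rw [hA2] at e1; nlinarith [h1, hX1, hY1, e1]
    have heqmid : f (2⁻¹ * a i + 2⁻¹ * b i) = 2⁻¹ * f (a i) + 2⁻¹ * f (b i) := by
      rw [hA2] at e1
      rw [← hμab i]; nlinarith [h1, hX1, hY1, e1]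
    -- a i = b i
    have hab : a i = b i := by
      by_contra hab
      have := hsc.2 (ha0 i) (hb0 i) hab (by norm_num : (0:ℝ) < 2⁻¹)
        (by norm_num : (0:ℝ) < 2⁻¹) (by norm_num : (2⁻¹:ℝ) + 2⁻¹ = 1)
      simp only [smul_eq_mul] at this
      exact absurd heqmid (ne_of_lt this)
    -- Jensen equality cases
    have hJX := (hsc.map_sum_eq_iff' (fun j _ => hwX0 i j) (hwXsum i)
      (fun j _ => heigX0 j)).mp (by rw [← haw i]; exact heqa)
    have hJY := (hsc.map_sum_eq_iff' (fun j _ => hwY0 i j) (hwYsum i)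
      (fun j _ => heigY0 j)).mp (by rw [← hbw i]; exact heqb)
    have hXu : X *ᵥ u i = a i • u i := by
      refine eigvec_reconstruct hX.1 fun j hj => ?_
      have hwj : wX i j ≠ 0 := by
        rw [hwX]; simpa using pow_ne_zero 2 hj
      rw [hJX j (Finset.mem_univ j) hwj, ← haw i]
    have hYu : Y *ᵥ u i = b i • u i := by
      refine eigvec_reconstruct hY.1 fun j hj => ?_
      have hwj : wY i j ≠ 0 := by
        rw [hwY]; simpa using pow_ne_zero 2 hj
      rw [hJY j (Finset.mem_univ j) hwj, ← hbw i]
    rw [hXu, hYu, hab]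
  -- conclude X = Y
  apply hne
  have hXV : X * V = Y * V := by
    ext r i
    have := congrFun (hkey i) r
    rwa [show (X *ᵥ u i) r = (X * V) r i from mulVec_col X V i r,
      show (Y *ᵥ u i) r = (Y * V) r i from mulVec_col Y V i r] at this
  calc X = X * (V * star V) := by rw [hV1, mul_one]
    _ = (X * V) * star V := by rw [mul_assoc]
    _ = (Y * V) * star V := by rw [hXV]
    _ = Y * (V * star V) := by rw [mul_assoc]
    _ = Y := by rw [hV1, mul_one]
end aux

end auxlemmas

/-- Asymptotics of the regularized SDP solutions: with
`Ω = {X : 𝒜(X) = b, X ⪰ 0}` nonempty compact and, for each `ε > 0`, `X*(ε)` a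
minimizer of `Tr(C·X) + ε·g(X)` over `Ω`, one has
`Tr(C·X*(ε)) → ρ = min{Tr(C·X) : X ∈ Ω}` as `ε ↓ 0`, and for every sequence
`ε_k ↓ 0` the sequence `X*(ε_k)` converges to the unique matrix of
`S = argmin{Tr(C·X) : X ∈ Ω}` minimizing the von Neumann entropy over `S`. -/
theorem regularized_SDP_solutions_converge {n m : ℕ}
    (𝒜 : Matrix (Fin n) (Fin n) ℝ →ₗ[ℝ] (Fin m → ℝ))
    (b : Fin m → ℝ) (C : Matrix (Fin n) (Fin n) ℝ) (hC : C.IsHermitian)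
    (Ω : Set (Matrix (Fin n) (Fin n) ℝ))
    (hΩ : Ω = {X : Matrix (Fin n) (Fin n) ℝ | 𝒜 X = b ∧ X.PosSemidef})
    (hne : Ω.Nonempty) (hcpt : IsCompact Ω)
    (Xε : ℝ → Matrix (Fin n) (Fin n) ℝ)
    (hXε : ∀ ε : ℝ, 0 < ε → Xε ε ∈ Ω ∧
      ∀ Y ∈ Ω, (C * Xε ε).trace + ε * vnEntropy (Xε ε) ≤
        (C * Y).trace + ε * vnEntropy Y)
    (ρ : ℝ) (hρ : ρ = sInf ((fun X => (C * X).trace) '' Ω))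
    (S : Set (Matrix (Fin n) (Fin n) ℝ))
    (hS : S = {X ∈ Ω | ∀ Y ∈ Ω, (C * X).trace ≤ (C * Y).trace}) :
    Tendsto (fun ε => (C * Xε ε).trace) (𝓝[>] (0 : ℝ)) (𝓝 ρ) ∧
    ∃ Xstar : Matrix (Fin n) (Fin n) ℝ,
      (Xstar ∈ S ∧ ∀ Y ∈ S, vnEntropy Xstar ≤ vnEntropy Y) ∧
      (∀ Y, (Y ∈ S ∧ ∀ Z ∈ S, vnEntropy Y ≤ vnEntropy Z) → Y = Xstar) ∧
      ∀ εk : ℕ → ℝ, (∀ k, 0 < εk k) → Antitone εk → Tendsto εk atTop (𝓝 0) →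
        Tendsto (fun k => Xε (εk k)) atTop (𝓝 Xstar) := by
  haveI : FirstCountableTopology (Matrix (Fin n) (Fin n) ℝ) :=
    inferInstanceAs (FirstCountableTopology (Fin n → Fin n → ℝ))
  have hΩpsd : ∀ X ∈ Ω, X.PosSemidef := fun X hX => by rw [hΩ] at hX; exact hX.2
  have hΩmap : ∀ X ∈ Ω, 𝒜 X = b := fun X hX => by rw [hΩ] at hX; exact hX.1
  have hΩcl : IsClosed Ω := hcpt.isClosed
  have htrC : Continuous fun X : Matrix (Fin n) (Fin n) ℝ => (C * X).trace :=
    (continuous_const.matrix_mul continuous_id).matrix_trace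
  have hgc : ContinuousOn vnEntropy Ω := continuousOn_vnEntropy hcpt hΩpsd
  obtain ⟨X₀, hX₀Ω, hX₀min⟩ := hcpt.exists_isMinOn hne htrC.continuousOn
  have hX₀min' : ∀ Y ∈ Ω, (C * X₀).trace ≤ (C * Y).trace := fun Y hY => hX₀min hY
  have hρ0 : ρ = (C * X₀).trace := by
    rw [hρ]
    apply le_antisymm
    · exact csInf_le (hcpt.image htrC).bddBelow ⟨X₀, hX₀Ω, rfl⟩
    · refine le_csInf (hne.image _) ?_
      rintro y ⟨Y, hY, rfl⟩
      exact hX₀min' Y hY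
  obtain ⟨B, hB⟩ := hcpt.exists_bound_of_continuousOn hgc
  have hB' : ∀ X ∈ Ω, |vnEntropy X| ≤ B := fun X hX => by
    simpa [Real.norm_eq_abs] using hB X hX
  have hρle : ∀ ε : ℝ, 0 < ε → ρ ≤ (C * Xε ε).trace := fun ε hε =>
    hρ0 ▸ hX₀min' _ (hXε ε hε).1
  have hub : ∀ ε : ℝ, 0 < ε → (C * Xε ε).trace ≤ ρ + ε * (2 * B) := by
    intro ε hε
    have h1 := (hXε ε hε).2 X₀ hX₀Ω
    have h2 := hB' _ (hXε ε hε).1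
    have h3 := hB' X₀ hX₀Ω
    rw [abs_le] at h2 h3
    rw [hρ0]
    nlinarith [mul_le_mul_of_nonneg_left
      (show vnEntropy X₀ - vnEntropy (Xε ε) ≤ 2 * B by linarith) hε.le]
  have part1 : Tendsto (fun ε => (C * Xε ε).trace) (𝓝[>] (0 : ℝ)) (𝓝 ρ) := by
    have hup : Tendsto (fun ε : ℝ => ρ + ε * (2 * B)) (𝓝[>] (0:ℝ)) (𝓝 ρ) := by
      have h0 : Tendsto (fun ε : ℝ => ρ + ε * (2 * B)) (𝓝 (0:ℝ)) (𝓝 (ρ + 0 * (2*B))) :=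
        (tendsto_id.mul_const _).const_add _
      simpa using h0.mono_left nhdsWithin_le_nhds
    refine tendsto_of_tendsto_of_tendsto_of_le_of_le' tendsto_const_nhds hup ?_ ?_
    · filter_upwards [self_mem_nhdsWithin] with ε hε
      exact hρle ε hε
    · filter_upwards [self_mem_nhdsWithin] with ε hε
      exact hub ε hε
  -- the argmin set S
  have hSsub : S ⊆ Ω := by rw [hS]; exact fun X hX => hX.1
  have hScl : IsClosed S := by
    have hrw : S = Ω ∩ ⋂ Y ∈ Ω, {X | (C * X).trace ≤ (C * Y).trace} := by
      rw [hS]; ext X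
      simp only [Set.mem_setOf_eq, Set.mem_inter_iff, Set.mem_iInter]
    rw [hrw]
    exact hΩcl.inter (isClosed_biInter fun Y _ => isClosed_le htrC continuous_const)
  have hScpt : IsCompact S := hcpt.of_isClosed_subset hScl hSsub
  have hX₀S : X₀ ∈ S := by rw [hS]; exact ⟨hX₀Ω, hX₀min'⟩
  have hStr : ∀ X ∈ S, (C * X).trace = ρ := by
    intro X hX
    rw [hS] at hX
    exact le_antisymm (hρ0 ▸ hX.2 X₀ hX₀Ω) (hρ0 ▸ hX₀min' X hX.1)
  obtain ⟨Xs, hXsS, hXsmin⟩ := hScpt.exists_isMinOn ⟨X₀, hX₀S⟩ (hgc.mono hSsub)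
  have hXsmin' : ∀ Y ∈ S, vnEntropy Xs ≤ vnEntropy Y := fun Y hY => hXsmin hY
  -- midpoints
  have hmidΩ : ∀ P ∈ Ω, ∀ Q ∈ Ω, (2⁻¹ : ℝ) • (P + Q) ∈ Ω := by
    intro P hP Q hQ
    rw [hΩ]
    refine ⟨?_, psd_smul (by norm_num) ((hΩpsd P hP).add (hΩpsd Q hQ))⟩
    rw [_root_.map_smul, map_add, hΩmap P hP, hΩmap Q hQ]
    funext i
    simp only [Pi.smul_apply, Pi.add_apply, smul_eq_mul]
    ring
  have hmidtr : ∀ P Q : Matrix (Fin n) (Fin n) ℝ,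
      (C * ((2⁻¹ : ℝ) • (P + Q))).trace = 2⁻¹ * ((C * P).trace + (C * Q).trace) := by
    intro P Q
    rw [mul_smul_comm, mul_add, Matrix.trace_smul, Matrix.trace_add, smul_eq_mul]
  have hmidS : ∀ P ∈ S, ∀ Q ∈ S, (2⁻¹ : ℝ) • (P + Q) ∈ S := by
    intro P hP Q hQ
    rw [hS]
    refine ⟨hmidΩ P (hSsub hP) Q (hSsub hQ), fun T hT => ?_⟩
    rw [hmidtr P Q, hStr P hP, hStr Q hQ]
    have := hρ0 ▸ hX₀min' T hT
    linarith
  -- uniqueness of the entropy minimizer on S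
  have huniq : ∀ Y, (Y ∈ S ∧ ∀ Z ∈ S, vnEntropy Y ≤ vnEntropy Z) → Y = Xs := by
    rintro Y ⟨hYS, hYmin⟩
    by_contra hne'
    have hstrict := vnEntropy_strict_mid (hΩpsd Y (hSsub hYS)) (hΩpsd Xs (hSsub hXsS)) hne'
    have hYXs : vnEntropy Y = vnEntropy Xs :=
      le_antisymm (hYmin Xs hXsS) (hXsmin' Y hYS)
    have hWS : (2⁻¹ : ℝ) • (Y + Xs) ∈ S := hmidS Y hYS Xs hXsS
    have hlt : vnEntropy ((2⁻¹ : ℝ) • (Y + Xs)) < vnEntropy Xs := by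
      rw [hYXs] at hstrict
      linarith
    exact absurd (hXsmin' _ hWS) (not_le.mpr hlt)
  refine ⟨part1, Xs, ⟨hXsS, hXsmin'⟩, huniq, ?_⟩
  -- sequential convergence
  intro εk hpos _hanti hto0
  have key : ∀ δ : ℕ → ℝ, (∀ j, 0 < δ j) → Tendsto δ atTop (𝓝 0) → ∀ a ∈ Ω,
      Tendsto (fun j => Xε (δ j)) atTop (𝓝 a) → a = Xs := by
    intro δ hδ hδ0 a haΩ hlim
    have hmemseq : ∀ j, Xε (δ j) ∈ Ω := fun j => (hXε _ (hδ j)).1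
    have htr : Tendsto (fun j => (C * Xε (δ j)).trace) atTop (𝓝 ((C * a).trace)) :=
      (htrC.tendsto a).comp hlim
    have hδg : Tendsto (fun j => δ j * vnEntropy (Xε (δ j))) atTop (𝓝 0) := by
      have hB2 : ∀ j, -(δ j * B) ≤ δ j * vnEntropy (Xε (δ j)) ∧
          δ j * vnEntropy (Xε (δ j)) ≤ δ j * B := by
        intro j
        have h1 := hB' _ (hmemseq j)
        rw [abs_le] at h1
        constructor <;> nlinarith [(hδ j).le]
      have hup : Tendsto (fun j => δ j * B) atTop (𝓝 0) := by
        simpa using hδ0.mul_const B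
      exact tendsto_of_tendsto_of_tendsto_of_le_of_le (by simpa using hup.neg) hup
        (fun j => (hB2 j).1) (fun j => (hB2 j).2)
    have haS : a ∈ S := by
      rw [hS]
      refine ⟨haΩ, fun Y hY => ?_⟩
      have hineq : ∀ j, (C * Xε (δ j)).trace + δ j * vnEntropy (Xε (δ j)) ≤
          (C * Y).trace + δ j * vnEntropy Y := fun j => (hXε _ (hδ j)).2 Y hY
      have hL : Tendsto (fun j => (C * Xε (δ j)).trace + δ j * vnEntropy (Xε (δ j)))
          atTop (𝓝 ((C * a).trace)) := by
        simpa using htr.add hδg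
      have hR : Tendsto (fun j => (C * Y).trace + δ j * vnEntropy Y)
          atTop (𝓝 ((C * Y).trace)) := by
        have : Tendsto (fun j => δ j * vnEntropy Y) atTop (𝓝 0) := by
          simpa using hδ0.mul_const (vnEntropy Y)
        simpa using tendsto_const_nhds.add this
      exact le_of_tendsto_of_tendsto' hL hR hineq
    have hgs : ∀ j, vnEntropy (Xε (δ j)) ≤ vnEntropy Xs := by
      intro j
      have h1 := (hXε _ (hδ j)).2 Xs (hSsub hXsS)
      have h2 : ρ ≤ (C * Xε (δ j)).trace := hρle _ (hδ j)
      have h3 : (C * Xs).trace = ρ := hStr Xs hXsS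
      have h4 : δ j * vnEntropy (Xε (δ j)) ≤ δ j * vnEntropy Xs := by linarith
      exact le_of_mul_le_mul_left h4 (hδ j)
    have hga : Tendsto (fun j => vnEntropy (Xε (δ j))) atTop (𝓝 (vnEntropy a)) :=
      (hgc a haΩ).tendsto.comp
        (tendsto_nhdsWithin_of_tendsto_nhds_of_eventually_within _ hlim
          (Filter.Eventually.of_forall hmemseq))
    have hgaXs : vnEntropy a ≤ vnEntropy Xs := le_of_tendsto hga
      (Filter.Eventually.of_forall hgs)
    exact huniq a ⟨haS, fun Z hZ => le_trans hgaXs (hXsmin' Z hZ)⟩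
  apply tendsto_of_subseq_tendsto
  intro ns hns
  obtain ⟨a, haΩ, φ, hφ, hconv⟩ := hcpt.tendsto_subseq
    (x := fun k => Xε (εk (ns k))) (fun k => (hXε _ (hpos _)).1)
  have hδ0 : Tendsto (fun j => εk (ns (φ j))) atTop (𝓝 0) :=
    hto0.comp (hns.comp hφ.tendsto_atTop)
  have haXs : a = Xs := key (fun j => εk (ns (φ j))) (fun j => hpos _) hδ0 a haΩ hconv
  exact ⟨φ, haXs ▸ hconv⟩
end
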